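/- arXiv:2206.02141 — 10 statements merged into one kernel-verified Lean document; each statement's English description precedes it below -/
import Mathlib

section
/- Let A be an n-by-n partial isometry (A A* A = A) with rank A = n - 1. If A is nilpotent, then A is unitarily similar to the n-by-n nilpotent Jordan block with eigenvalue 0. -/
open Matrix

/-- The n-by-n nilpotent Jordan block: ones on the superdiagonal, zeros elsewhere. -/
def jordanBlock (n : ℕ) : Matrix (Fin n) (Fin n) ℂ :=
  Matrix.of fun i j => if (i : ℕ) + 1 = (j : ℕ) then 1 else 0

/-!
The kernel of `A` is a line, and since `dim ker A^k ≤ k` (Sylvester) while `A^n = 0`, it equals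
`range A^(n-1)`. Take a unit vector `u` in it and put `u_k = (Aᴴ)^k u`. As `Aᴴ A` is the identity
modulo `ker A`, `Aᴴ` maps `range A^(j+1)` into `range A^j`; hence `u_k ∈ range A` for `k < n - 1`,
where `A Aᴴ` acts as the identity, i.e. `A u_(k+1) = u_k`. By induction the `u_k` are orthonormal,
and the unitary with columns `u_0, …, u_(n-1)` conjugates `jordanBlock n` to `A`.
-/

open Module

namespace LinearMap

variable {K U V W : Type*} [Field K] [AddCommGroup U] [Module K U] [AddCommGroup V] [Module K V]
  [AddCommGroup W] [Module K W]

theorem finrank_ker_comp_le [FiniteDimensional K U] [FiniteDimensional K V]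
    (f : V →ₗ[K] W) (g : U →ₗ[K] V) :
    finrank K (ker (f ∘ₗ g)) ≤ finrank K (ker f) + finrank K (ker g) := by
  have hg : ∀ x ∈ ker (f ∘ₗ g), g x ∈ ker f := fun _ hx ↦ hx
  have h_range : finrank K (range (g.restrict hg)) ≤ finrank K (ker f) := Submodule.finrank_le _
  have h_ker : finrank K (ker (g.restrict hg)) ≤ finrank K (ker g) := by
    rw [ker_restrict, ← Submodule.finrank_map_subtype_eq, Submodule.map_comap_subtype]
    exact Submodule.finrank_mono inf_le_right
  have := (g.restrict hg).finrank_range_add_finrank_ker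
  omega

end LinearMap

namespace Module.End

variable {K V : Type*} [Field K] [AddCommGroup V] [Module K V]

theorem range_pow_antitone (f : End K V) : Antitone fun k : ℕ ↦ LinearMap.range (f ^ k) := by
  intro i j h
  dsimp only
  rw [← Nat.add_sub_cancel' h, pow_add, mul_eq_comp]
  exact LinearMap.range_comp_le_range _ _

variable [FiniteDimensional K V]

theorem finrank_ker_pow_le (f : End K V) (k : ℕ) :
    finrank K (LinearMap.ker (f ^ k)) ≤ k * finrank K (LinearMap.ker f) := by
  induction k with
  | zero => simp [one_eq_id]
  | succ k ih =>
    rw [pow_succ', mul_eq_comp, add_one_mul]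
    linarith [LinearMap.finrank_ker_comp_le f (f ^ k)]

theorem range_pow_finrank_sub_one_eq_ker {f : End K V} (hf : IsNilpotent f)
    (h : finrank K (LinearMap.ker f) = 1) :
    LinearMap.range (f ^ (finrank K V - 1)) = LinearMap.ker f := by
  have h_pos : 0 < finrank K V := by have := Submodule.finrank_le (LinearMap.ker f); omega
  have h_pow : f ^ finrank K V = 0 := by
    simpa [hf.charpoly_eq_X_pow_finrank] using f.aeval_self_charpoly
  refine Submodule.eq_of_le_of_finrank_le ?_ ?_
  · rintro _ ⟨x, rfl⟩
    rw [LinearMap.mem_ker, ← Module.End.mul_apply, ← pow_succ', Nat.sub_add_cancel h_pos, h_pow,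
      LinearMap.zero_apply]
  · have := (f ^ (finrank K V - 1)).finrank_range_add_finrank_ker
    have := finrank_ker_pow_le f (finrank K V - 1)
    rw [h] at this ⊢
    omega

end Module.End

namespace Matrix

theorem rank_add_finrank_ker_toLin' {n K : Type*} [Fintype n] [DecidableEq n] [Field K]
    (A : Matrix n n K) : A.rank + finrank K (LinearMap.ker (toLin' A)) = Fintype.card n := by
  rw [rank, ← toLin'_apply', LinearMap.finrank_range_add_finrank_ker, finrank_fintype_fun_eq_card]

variable {n K : Type*} [Fintype n] [Field K] [StarRing K] {A : Matrix n n K}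

theorem mulVec_conjTranspose_mulVec_mulVec (hA : A * Aᴴ * A = A) (x : n → K) :
    A *ᵥ (Aᴴ *ᵥ (A *ᵥ x)) = A *ᵥ x := by
  rw [mulVec_mulVec, mulVec_mulVec, hA]

theorem exists_mem_star_dotProduct_self_eq_one {𝕜 : Type*} [RCLike 𝕜] {p : Submodule 𝕜 (n → 𝕜)}
    (hp : p ≠ ⊥) : ∃ u ∈ p, star u ⬝ᵥ u = 1 := by
  obtain ⟨v, hv, hv0⟩ := Submodule.exists_mem_ne_zero_of_ne_bot hp
  set x : EuclideanSpace 𝕜 n := WithLp.toLp 2 v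
  have hx : ‖(‖x‖⁻¹ : 𝕜) • x‖ = 1 := norm_smul_inv_norm (by simpa [x] using hv0)
  refine ⟨(‖x‖⁻¹ : 𝕜) • v, p.smul_mem _ hv, ?_⟩
  rw [dotProduct_comm, ← EuclideanSpace.inner_toLp_toLp, WithLp.toLp_smul,
    inner_self_eq_norm_sq_to_K, hx]
  simp

variable [DecidableEq n]

theorem conjTranspose_mulVec_mem_range_pow (hA : A * Aᴴ * A = A) {j : ℕ}
    (hker : LinearMap.ker (toLin' A) ≤ LinearMap.range (toLin' A ^ j)) {x : n → K}
    (hx : x ∈ LinearMap.range (toLin' A ^ (j + 1))) :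
    Aᴴ *ᵥ x ∈ LinearMap.range (toLin' A ^ j) := by
  obtain ⟨y, rfl⟩ := hx
  set z := (toLin' A ^ j) y
  have hz : (toLin' A ^ (j + 1)) y = A *ᵥ z := by rw [pow_succ', End.mul_apply, toLin'_apply]
  have h_defect : Aᴴ *ᵥ (A *ᵥ z) - z ∈ LinearMap.ker (toLin' A) := by
    rw [LinearMap.mem_ker, toLin'_apply, mulVec_sub, mulVec_conjTranspose_mulVec_mulVec hA,
      sub_self]
  rw [hz, ← sub_add_cancel (Aᴴ *ᵥ (A *ᵥ z)) z]
  exact add_mem (hker h_defect) ⟨y, rfl⟩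

theorem conjTranspose_pow_mulVec_mem_range_pow (hA : A * Aᴴ * A = A) {m : ℕ}
    (hker : LinearMap.ker (toLin' A) ≤ LinearMap.range (toLin' A ^ m)) {u : n → K}
    (hu : u ∈ LinearMap.range (toLin' A ^ m)) :
    ∀ k ≤ m, (Aᴴ ^ k) *ᵥ u ∈ LinearMap.range (toLin' A ^ (m - k))
  | 0, _ => by simpa using hu
  | k + 1, hk => by
    have ih := conjTranspose_pow_mulVec_mem_range_pow hA hker hu k (by omega)
    rw [pow_succ', ← mulVec_mulVec]
    refine conjTranspose_mulVec_mem_range_pow hA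
      (hker.trans (End.range_pow_antitone (toLin' A) (Nat.sub_le m (k + 1)))) ?_
    rwa [show m - (k + 1) + 1 = m - k by omega]

theorem mulVec_conjTranspose_pow_succ_mulVec (hA : A * Aᴴ * A = A) {m : ℕ}
    (hker : LinearMap.ker (toLin' A) ≤ LinearMap.range (toLin' A ^ m)) {u : n → K}
    (hu : u ∈ LinearMap.range (toLin' A ^ m)) {k : ℕ} (hk : k < m) :
    A *ᵥ ((Aᴴ ^ (k + 1)) *ᵥ u) = (Aᴴ ^ k) *ᵥ u := by
  obtain ⟨y, hy⟩ : (Aᴴ ^ k) *ᵥ u ∈ LinearMap.range (toLin' A) := by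
    simpa using End.range_pow_antitone (toLin' A) (by omega : 1 ≤ m - k)
      (conjTranspose_pow_mulVec_mem_range_pow hA hker hu k hk.le)
  rw [pow_succ', ← mulVec_mulVec, ← hy, toLin'_apply, mulVec_conjTranspose_mulVec_mulVec hA]

theorem star_dotProduct_conjTranspose_pow_mulVec {m : ℕ} {u : n → K} (hu : star u ⬝ᵥ u = 1)
    (hAu : A *ᵥ u = 0) (hstep : ∀ k < m, A *ᵥ ((Aᴴ ^ (k + 1)) *ᵥ u) = (Aᴴ ^ k) *ᵥ u) :
    ∀ i j, i ≤ m → j ≤ m →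
      star ((Aᴴ ^ i) *ᵥ u) ⬝ᵥ ((Aᴴ ^ j) *ᵥ u) = if i = j then 1 else 0 := by
  have h_adj : ∀ x y : n → K, star x ⬝ᵥ (Aᴴ *ᵥ y) = star (A *ᵥ x) ⬝ᵥ y := fun x y ↦ by
    rw [dotProduct_mulVec, ← star_mulVec]
  have h_adj' : ∀ x y : n → K, star (Aᴴ *ᵥ x) ⬝ᵥ y = star x ⬝ᵥ (A *ᵥ y) := fun x y ↦ by
    rw [star_mulVec, conjTranspose_conjTranspose, dotProduct_mulVec]
  have h_zero : ∀ j, star u ⬝ᵥ ((Aᴴ ^ j) *ᵥ u) = if 0 = j then 1 else 0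
    | 0 => by simpa using hu
    | j + 1 => by rw [pow_succ', ← mulVec_mulVec, h_adj, hAu]; simp
  intro i
  induction i with
  | zero => intro j _ _; simpa using h_zero j
  | succ i ih =>
    rintro (_ | j) hi hj
    · rw [pow_zero, one_mulVec, star_dotProduct, h_zero]; simp
    · rw [pow_succ' Aᴴ i, ← mulVec_mulVec, h_adj', hstep j (by omega), ih j (by omega) (by omega)]
      simp

theorem transpose_of_mem_unitaryGroup {u : n → n → K}
    (hu : ∀ i j, star (u i) ⬝ᵥ u j = if i = j then 1 else 0) :
    (of u)ᵀ ∈ unitaryGroup n K := by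
  rw [mem_unitaryGroup_iff']
  ext i j
  exact (hu i j).trans one_apply.symm

end Matrix

theorem mul_jordanBlock_apply_zero {n : ℕ} (M : Matrix (Fin n) (Fin n) ℂ) (i : Fin n)
    (h : 0 < n) : (M * jordanBlock n) i ⟨0, h⟩ = 0 := by
  simp [Matrix.mul_apply, jordanBlock]

theorem mul_jordanBlock_apply_succ {n : ℕ} (M : Matrix (Fin n) (Fin n) ℂ) (i : Fin n) {l : ℕ}
    (h : l + 1 < n) : (M * jordanBlock n) i ⟨l + 1, h⟩ = M i ⟨l, by omega⟩ := by
  rw [Matrix.mul_apply, Finset.sum_eq_single ⟨l, by omega⟩]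
  · simp [jordanBlock]
  · intro k _ hk
    simp [jordanBlock, Fin.ext_iff] at hk ⊢
    omega
  · simp

theorem mul_transpose_of_eq_mul_jordanBlock {n : ℕ} {A : Matrix (Fin n) (Fin n) ℂ}
    {u : ℕ → Fin n → ℂ} (h_zero : A *ᵥ u 0 = 0)
    (h_succ : ∀ l, l + 1 < n → A *ᵥ u (l + 1) = u l) :
    A * (of fun j : Fin n ↦ u j)ᵀ = (of fun j : Fin n ↦ u j)ᵀ * jordanBlock n := by
  ext i ⟨_ | l, hj⟩
  · rw [mul_jordanBlock_apply_zero]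
    exact congrFun h_zero i
  · rw [mul_jordanBlock_apply_succ]
    exact congrFun (h_succ l hj) i

theorem nilpotent_corank_one_partial_isometry_is_jordan (n : ℕ)
    (A : Matrix (Fin n) (Fin n) ℂ)
    (hA : A * Aᴴ * A = A) (hr : A.rank = n - 1) (hnil : IsNilpotent A) :
    ∃ U : Matrix.unitaryGroup (Fin n) ℂ,
      A = (U : Matrix (Fin n) (Fin n) ℂ) * jordanBlock n * (U : Matrix (Fin n) (Fin n) ℂ)ᴴ := by
  obtain _ | m := n
  · exact ⟨1, Subsingleton.elim _ _⟩
  have h_ker : finrank ℂ (LinearMap.ker (toLin' A)) = 1 := by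
    have := A.rank_add_finrank_ker_toLin'
    rw [hr, Fintype.card_fin] at this
    omega
  have h_range : LinearMap.range (toLin' A ^ m) = LinearMap.ker (toLin' A) := by
    have h := End.range_pow_finrank_sub_one_eq_ker
      (hnil.map toLinAlgEquiv' : IsNilpotent (toLin' A)) h_ker
    rwa [finrank_fin_fun, Nat.add_sub_cancel] at h
  obtain ⟨u, hu_ker, hu⟩ := exists_mem_star_dotProduct_self_eq_one (p := LinearMap.ker (toLin' A))
    fun h ↦ by rw [h, finrank_bot] at h_ker; exact zero_ne_one h_ker
  have hAu : A *ᵥ u = 0 := by rwa [LinearMap.mem_ker, toLin'_apply] at hu_ker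
  have h_step : ∀ k < m, A *ᵥ ((Aᴴ ^ (k + 1)) *ᵥ u) = (Aᴴ ^ k) *ᵥ u := fun k hk ↦
    mulVec_conjTranspose_pow_succ_mulVec hA h_range.ge (h_range ▸ hu_ker) hk
  have h_orth := star_dotProduct_conjTranspose_pow_mulVec hu hAu h_step
  set U : Matrix (Fin (m + 1)) (Fin (m + 1)) ℂ := (of fun j : Fin (m + 1) ↦ (Aᴴ ^ (j : ℕ)) *ᵥ u)ᵀ
  have hU : U ∈ unitaryGroup (Fin (m + 1)) ℂ := transpose_of_mem_unitaryGroup fun i j ↦ by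
    simpa only [Fin.val_inj] using h_orth i j (by omega) (by omega)
  have hAU : A * U = U * jordanBlock (m + 1) :=
    mul_transpose_of_eq_mul_jordanBlock (u := fun k ↦ (Aᴴ ^ k) *ᵥ u) (by simpa using hAu)
      fun l hl ↦ h_step l (by omega)
  refine ⟨⟨U, hU⟩, ?_⟩
  calc A = A * U * Uᴴ := by
        rw [mul_assoc, ← star_eq_conjTranspose, mem_unitaryGroup_iff.mp hU, mul_one]
    _ = U * jordanBlock (m + 1) * Uᴴ := by rw [hAU]
end

section
/- The 3-by-3 matrix A with rows (0, √(1−|λ₁|²), −conj(λ₁)√(1−|λ₂|²)), (0, λ₁, √(1−|λ₁|²)√(1−|λ₂|²)), (0, 0, λ₂), where |λ₁|, |λ₂| < 1, satisfies A A* A = A, i.e., A is a partial isometry. -/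
/-! The first column of `A` vanishes and the other two columns are orthonormal, because
`|λ|² + (√(1 - |λ|²))² = 1`. Hence `Aᴴ * A = diag(0, 1, 1)`, and right multiplication by
this projection fixes `A`. -/

open Matrix ComplexConjugate

theorem Matrix.conjTranspose_fin_three_of {α : Type*} [Star α] (a b c d e f g h i : α) :
    (!![a, b, c; d, e, f; g, h, i])ᴴ =
      !![star a, star d, star g; star b, star e, star h; star c, star f, star i] := by
  ext i j
  fin_cases i <;> fin_cases j <;> rfl

theorem Complex.conj_mul_self_add_sqrt_one_sub_norm_sq_sq {z : ℂ} (hz : ‖z‖ ≤ 1) :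
    conj z * z + (Real.sqrt (1 - ‖z‖ ^ 2) : ℂ) ^ 2 = 1 := by
  rw [← Complex.ofReal_pow, Real.sq_sqrt (by nlinarith [norm_nonneg z]), mul_comm,
    Complex.mul_conj, Complex.normSq_eq_norm_sq]
  push_cast
  ring

section PartialIsometryModel

variable {R : Type*} [CommRing R] [StarRing R]

/-- `s` and `t` play the roles of `√(1 - |a|²)` and `√(1 - |b|²)`. -/
def partialIsometryModel (a b s t : R) : Matrix (Fin 3) (Fin 3) R :=
  !![0, s, -star a * t; 0, a, s * t; 0, 0, b]

variable {a b s t : R}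

theorem partialIsometryModel_conjTranspose_mul_self (hs : IsSelfAdjoint s) (ht : IsSelfAdjoint t)
    (ha : star a * a + s ^ 2 = 1) (hb : star b * b + t ^ 2 = 1) :
    (partialIsometryModel a b s t)ᴴ * partialIsometryModel a b s t =
      !![0, 0, 0; 0, 1, 0; 0, 0, 1] := by
  simp only [partialIsometryModel, conjTranspose_fin_three_of, mul_fin_three, star_mul',
    star_neg, star_star, hs.star_eq, ht.star_eq, star_zero, EmbeddingLike.apply_eq_iff_eq,
    vecCons_inj, mul_zero, zero_mul, add_zero, and_true, true_and]
  exact ⟨⟨by linear_combination ha, by ring⟩, by ring,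
    by linear_combination t ^ 2 * ha + hb⟩

theorem partialIsometryModel_mul_conjTranspose_mul_self (hs : IsSelfAdjoint s)
    (ht : IsSelfAdjoint t) (ha : star a * a + s ^ 2 = 1) (hb : star b * b + t ^ 2 = 1) :
    partialIsometryModel a b s t * (partialIsometryModel a b s t)ᴴ *
      partialIsometryModel a b s t = partialIsometryModel a b s t := by
  rw [Matrix.mul_assoc, partialIsometryModel_conjTranspose_mul_self hs ht ha hb]
  simp [partialIsometryModel]

end PartialIsometryModel

theorem three_by_three_rank_two_partial_isometry (l1 l2 : ℂ)
    (h1 : ‖l1‖ < 1) (h2 : ‖l2‖ < 1) :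
    let A : Matrix (Fin 3) (Fin 3) ℂ :=
      !![0, (Real.sqrt (1 - ‖l1‖ ^ 2) : ℂ),
           -(starRingEnd ℂ l1) * (Real.sqrt (1 - ‖l2‖ ^ 2) : ℂ);
         0, l1, (Real.sqrt (1 - ‖l1‖ ^ 2) : ℂ) * (Real.sqrt (1 - ‖l2‖ ^ 2) : ℂ);
         0, 0, l2]
    A * Aᴴ * A = A :=
  partialIsometryModel_mul_conjTranspose_mul_self (Complex.conj_ofReal _) (Complex.conj_ofReal _)
    (Complex.conj_mul_self_add_sqrt_one_sub_norm_sq_sq h1.le)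
    (Complex.conj_mul_self_add_sqrt_one_sub_norm_sq_sq h2.le)
end

section
/- The 5-by-5 matrix A with nonzero entries A₁₃ = 1, A₂₄ = b, A₂₅ = tc, A₃₄ = c, A₃₅ = −tb, A₄₅ = s, where b,c,s,t ≥ 0, s² + t² = 1, and b² + c² = 1, is a nilpotent partial isometry of rank three: A⁴ = 0, A A* A = A, and rank A = 3 holds whenever s ≠ 0 or (b ≠ 0 and c ≠ 0). -/
open Matrix

set_option maxHeartbeats 1000000

lemma rank_ge_aux (A : Matrix (Fin 5) (Fin 5) ℂ) (E : Matrix (Fin 3) (Fin 5) ℂ)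
    (F : Matrix (Fin 5) (Fin 3) ℂ) (M : Matrix (Fin 3) (Fin 3) ℂ)
    (h : E * A * F = M) (hM : M.det ≠ 0) : 3 ≤ A.rank := by
  have hu : IsUnit M := (Matrix.isUnit_iff_isUnit_det M).mpr (Ne.isUnit hM)
  have h1 : M.rank = 3 := by rw [Matrix.rank_of_isUnit M hu]; simp
  calc (3 : ℕ) = M.rank := h1.symm
    _ ≤ (E * A).rank := by rw [← h]; exact Matrix.rank_mul_le_left (E * A) F
    _ ≤ A.rank := Matrix.rank_mul_le_right E A

theorem nilpotent_rank_three_partial_isometry_5x5 (b c s t : ℝ)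
    (hb : 0 ≤ b) (hc : 0 ≤ c) (hs : 0 ≤ s) (ht : 0 ≤ t)
    (hst : s ^ 2 + t ^ 2 = 1) (hbc : b ^ 2 + c ^ 2 = 1) :
    let A : Matrix (Fin 5) (Fin 5) ℂ :=
      !![0, 0, 1, 0, 0;
         0, 0, 0, (b : ℂ), ((t * c : ℝ) : ℂ);
         0, 0, 0, (c : ℂ), ((-(t * b) : ℝ) : ℂ);
         0, 0, 0, 0, (s : ℂ);
         0, 0, 0, 0, 0]
    A ^ 4 = 0 ∧ A * Aᴴ * A = A ∧ ((s ≠ 0 ∨ (b ≠ 0 ∧ c ≠ 0)) → A.rank = 3) := by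
  intro A
  have hst' : (s:ℂ) ^ 2 + (t:ℂ) ^ 2 = 1 := by exact_mod_cast hst
  have hbc' : (b:ℂ) ^ 2 + (c:ℂ) ^ 2 = 1 := by exact_mod_cast hbc
  refine ⟨?_, ?_, ?_⟩
  · -- A ^ 4 = 0
    have h2 : A ^ 2 = !![0,0,0,(c:ℂ),-((t:ℂ)*b);
               0,0,0,0,(b:ℂ)*s;
               0,0,0,0,(c:ℂ)*s;
               0,0,0,0,0;
               0,0,0,0,0] := by
      rw [sq]
      ext i j
      fin_cases i <;> fin_cases j <;>
        simp [A, mul_apply, Fin.sum_univ_five, vecHead, vecTail]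
    have h4 : A ^ 4 = A ^ 2 * A ^ 2 := by rw [← pow_add]
    rw [h4, h2]
    ext i j
    fin_cases i <;> fin_cases j <;>
      simp [mul_apply, Fin.sum_univ_five, vecHead, vecTail]
  · -- partial isometry
    have h1 : Aᴴ * A = !![0,0,0,0,0; 0,0,0,0,0; 0,0,1,0,0; 0,0,0,1,0; 0,0,0,0,1] := by
      ext i j
      fin_cases i <;> fin_cases j <;>
        simp [A, mul_apply, conjTranspose_apply, Fin.sum_univ_five, vecHead, vecTail,
          Complex.star_def, Complex.conj_ofReal] <;>
        first
        | ring1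
        | linear_combination hbc'
        | linear_combination hst' + (t:ℂ)^2 * hbc'
        | linear_combination hst'
    rw [mul_assoc, h1]
    ext i j
    fin_cases i <;> fin_cases j <;>
      simp [A, mul_apply, Fin.sum_univ_five, vecHead, vecTail]
  · -- rank
    intro _
    have hub : A.rank ≤ 3 := by
      have hGC : (!![1,0,0; 0,(b:ℂ),(t:ℂ)*c; 0,(c:ℂ),-((t:ℂ)*b); 0,0,(s:ℂ); 0,0,0] *
          !![0,0,1,0,0; 0,0,0,1,0; 0,0,0,0,(1:ℂ)] : Matrix (Fin 5) (Fin 5) ℂ) = A := by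
        ext i j
        fin_cases i <;> fin_cases j <;>
          simp [A, mul_apply, Fin.sum_univ_three, vecHead, vecTail]
      have hle1 : A.rank ≤
          (!![1,0,0; 0,(b:ℂ),(t:ℂ)*c; 0,(c:ℂ),-((t:ℂ)*b); 0,0,(s:ℂ); 0,0,0]).rank := by
        rw [← hGC]; exact Matrix.rank_mul_le_left _ _
      have hle2 : (!![1,0,0; 0,(b:ℂ),(t:ℂ)*c; 0,(c:ℂ),-((t:ℂ)*b); 0,0,(s:ℂ); 0,0,0]).rank
          ≤ 3 := by
        simpa using Matrix.rank_le_card_width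
          !![1,0,0; 0,(b:ℂ),(t:ℂ)*c; 0,(c:ℂ),-((t:ℂ)*b); 0,0,(s:ℂ); 0,0,0]
      omega
    have hlb : 3 ≤ A.rank := by
      by_cases hs0 : s = 0
      · -- then t ≠ 0
        have ht0 : (t:ℂ) ≠ 0 := by
          intro h0
          have h0' : t = 0 := by exact_mod_cast h0
          rw [hs0, h0'] at hst; norm_num at hst
        refine rank_ge_aux A !![1,0,0,0,0; 0,1,0,0,0; 0,0,1,0,0]
          !![0,0,0; 0,0,0; 1,0,0; 0,1,0; 0,0,1]
          !![1,0,0; 0,(b:ℂ),(t:ℂ)*c; 0,(c:ℂ),-((t:ℂ)*b)] ?_ ?_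
        · ext i j
          fin_cases i <;> fin_cases j <;>
            simp [A, mul_apply, Fin.sum_univ_five, vecHead, vecTail]
        · have hdet : (!![1,0,0; 0,(b:ℂ),(t:ℂ)*c; 0,(c:ℂ),-((t:ℂ)*b)]).det = -(t:ℂ) := by
            simp [Matrix.det_fin_three]
            linear_combination (-(t:ℂ)) * hbc'
          rw [hdet]
          exact neg_ne_zero.mpr ht0
      · have hsc : (s:ℂ) ≠ 0 := by exact_mod_cast hs0
        by_cases hb0 : b = 0
        · have hc0 : (c:ℂ) ≠ 0 := by
            intro h0
            have h0' : c = 0 := by exact_mod_cast h0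
            rw [hb0, h0'] at hbc; norm_num at hbc
          refine rank_ge_aux A !![1,0,0,0,0; 0,0,1,0,0; 0,0,0,1,0]
            !![0,0,0; 0,0,0; 1,0,0; 0,1,0; 0,0,1]
            !![1,0,0; 0,(c:ℂ),-((t:ℂ)*b); 0,0,(s:ℂ)] ?_ ?_
          · ext i j
            fin_cases i <;> fin_cases j <;>
              simp [A, mul_apply, Fin.sum_univ_five, vecHead, vecTail]
          · have hdet : (!![1,0,0; 0,(c:ℂ),-((t:ℂ)*b); 0,0,(s:ℂ)]).det = (c:ℂ) * s := by
              simp [Matrix.det_fin_three]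
            rw [hdet]
            exact mul_ne_zero hc0 hsc
        · have hbC : (b:ℂ) ≠ 0 := by exact_mod_cast hb0
          refine rank_ge_aux A !![1,0,0,0,0; 0,1,0,0,0; 0,0,0,1,0]
            !![0,0,0; 0,0,0; 1,0,0; 0,1,0; 0,0,1]
            !![1,0,0; 0,(b:ℂ),(t:ℂ)*c; 0,0,(s:ℂ)] ?_ ?_
          · ext i j
            fin_cases i <;> fin_cases j <;>
              simp [A, mul_apply, Fin.sum_univ_five, vecHead, vecTail]
          · have hdet : (!![1,0,0; 0,(b:ℂ),(t:ℂ)*c; 0,0,(s:ℂ)]).det = (b:ℂ) * s := by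
              simp [Matrix.det_fin_three]
            rw [hdet]
            exact mul_ne_zero hbC hsc
    omega
end

section
/- For the 5-by-5 matrix A = [[0,0,1,0,0],[0,0,0,b,tc],[0,0,0,c,−tb],[0,0,0,0,s],[0,0,0,0,0]] with b,c,s,t ≥ 0, s²+t²=1, b²+c²=1, and for any real θ, the characteristic polynomial of Re(e^{−iθ}A) equals −λ⁵ + (3/4)λ³ − (1/16)(c²t² + b² + 1)λ − (1/16) b c s t cos θ. -/
open Matrix

/-!
Write `Re(e^{-iθ} A) = u • A + w • Aᵀ` with `u = e^{-iθ}/2` and `w = conj u`. The characteristic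
polynomial of `u • A + w • Aᵀ` is a polynomial identity over any commutative ring, obtained by
cofactor expansion; it depends on `u, w` only through `u * w = 1/4` and `u + w = cos θ`, and the
relations `b² + c² = 1`, `s² + t² = 1` then collapse its coefficients to the stated ones.
-/

def kippenhahnMatrix {R : Type*} [Ring R] (b c s t : R) : Matrix (Fin 5) (Fin 5) R :=
  !![0, 0, 1, 0, 0;
     0, 0, 0, b, t * c;
     0, 0, 0, c, -(t * b);
     0, 0, 0, 0, s;
     0, 0, 0, 0, 0]

theorem kippenhahnMatrix_map {R S : Type*} [Ring R] [Ring S] (f : R →+* S) (b c s t : R) :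
    (kippenhahnMatrix b c s t).map f = kippenhahnMatrix (f b) (f c) (f s) (f t) := by
  ext i j
  fin_cases i <;> fin_cases j <;> simp [kippenhahnMatrix]

open Polynomial in
theorem charpoly_smul_kippenhahnMatrix_add_smul_transpose {R : Type*} [CommRing R]
    (u w b c s t : R) :
    (u • kippenhahnMatrix b c s t + w • (kippenhahnMatrix b c s t)ᵀ).charpoly =
      X ^ 5 - C (u * w * (1 + b ^ 2 + c ^ 2 + t ^ 2 * (b ^ 2 + c ^ 2) + s ^ 2)) * X ^ 3
        + C ((u * w) ^ 2 * (b ^ 2 + t ^ 2 * c ^ 2 + s ^ 2 + t ^ 2 * (b ^ 2 + c ^ 2) ^ 2)) * X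
        + C ((u * w) ^ 2 * (b * c * s * t * (u + w))) := by
  simp [charpoly, det_succ_row_zero, Fin.sum_univ_succ, kippenhahnMatrix, charmatrix_apply,
    Fin.succAbove]
  ring

theorem half_smul_add_conjTranspose {n K : Type*} [Field K] [StarRing K] (z : K)
    (A : Matrix n n K) :
    (1 / 2 : K) • (z • A + (z • A)ᴴ) = (z / 2) • A + (star z / 2) • Aᴴ := by
  rw [conjTranspose_smul, smul_add, smul_smul, smul_smul, one_div, inv_mul_eq_div, inv_mul_eq_div]

theorem Complex.half_exp_neg_mul_I_mul_star (θ : ℝ) :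
    Complex.exp (-θ * Complex.I) / 2 * (star (Complex.exp (-θ * Complex.I)) / 2) = 1 / 4 := by
  rw [div_mul_div_comm, Complex.star_def, Complex.mul_conj, Complex.normSq_eq_norm_sq,
    ← Complex.ofReal_neg, Complex.norm_exp_ofReal_mul_I]
  norm_num

theorem Complex.half_exp_neg_mul_I_add_star (θ : ℝ) :
    Complex.exp (-θ * Complex.I) / 2 + star (Complex.exp (-θ * Complex.I)) / 2 = Real.cos θ := by
  rw [← add_div, Complex.star_def, Complex.add_conj, ← Complex.ofReal_neg,
    Complex.exp_ofReal_mul_I_re, Real.cos_neg]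
  push_cast
  ring

open Polynomial in
theorem kippenhahn_poly_5x5_general (b c s t θ : ℝ)
    (hst : s ^ 2 + t ^ 2 = 1) (hbc : b ^ 2 + c ^ 2 = 1) :
    let A : Matrix (Fin 5) (Fin 5) ℂ :=
      !![0, 0, 1, 0, 0;
         0, 0, 0, (b : ℂ), ((t * c : ℝ) : ℂ);
         0, 0, 0, (c : ℂ), ((-(t * b) : ℝ) : ℂ);
         0, 0, 0, 0, (s : ℂ);
         0, 0, 0, 0, 0]
    let M : Matrix (Fin 5) (Fin 5) ℂ :=
      (1 / 2 : ℂ) • (Complex.exp (-(θ : ℂ) * Complex.I) • A +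
        (Complex.exp (-(θ : ℂ) * Complex.I) • A)ᴴ)
    Eq (-M.charpoly)
      (-X ^ 5 + C (3 / 4 : ℂ) * X ^ 3
        - C (((1 / 16 * (c ^ 2 * t ^ 2 + b ^ 2 + 1) : ℝ)) : ℂ) * X
        - C (((1 / 16 * (b * c * s * t * Real.cos θ) : ℝ)) : ℂ)) := by
  intro A M
  have hA : A = (kippenhahnMatrix b c s t).map Complex.ofRealHom := by
    rw [kippenhahnMatrix_map]
    simp [A, kippenhahnMatrix]
  have hAH : Aᴴ = Aᵀ := by
    rw [hA]
    ext i j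
    simp
  have hM : M = _ := half_smul_add_conjTranspose (Complex.exp (-(θ : ℂ) * Complex.I)) A
  rw [hM, hAH, hA, kippenhahnMatrix_map, charpoly_smul_kippenhahnMatrix_add_smul_transpose,
    Complex.half_exp_neg_mul_I_mul_star, Complex.half_exp_neg_mul_I_add_star]
  have hbc' : (b : ℂ) ^ 2 + (c : ℂ) ^ 2 = 1 := by exact_mod_cast hbc
  have hst' : (s : ℂ) ^ 2 + (t : ℂ) ^ 2 = 1 := by exact_mod_cast hst
  have hX3 : (1 / 4 : ℂ) * (1 + b ^ 2 + c ^ 2 + t ^ 2 * (b ^ 2 + c ^ 2) + s ^ 2) = 3 / 4 := by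
    linear_combination (1 / 4 : ℂ) * (1 + (t : ℂ) ^ 2) * hbc' + (1 / 4 : ℂ) * hst'
  have hX : (1 / 4 : ℂ) ^ 2 * (b ^ 2 + t ^ 2 * c ^ 2 + s ^ 2 + t ^ 2 * (b ^ 2 + c ^ 2) ^ 2) =
      1 / 16 * (c ^ 2 * t ^ 2 + b ^ 2 + 1) := by
    rw [hbc']
    linear_combination (1 / 16 : ℂ) * hst'
  simp only [Complex.ofRealHom_eq_coe]
  rw [hX3, hX, show ((1 : ℂ) / 4) ^ 2 = 1 / 16 by norm_num]
  push_cast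
  ring

open Polynomial in
theorem kippenhahn_poly_5x5 (b c s t θ : ℝ)
    (hb : 0 ≤ b) (hc : 0 ≤ c) (hs : 0 ≤ s) (ht : 0 ≤ t)
    (hst : s ^ 2 + t ^ 2 = 1) (hbc : b ^ 2 + c ^ 2 = 1) :
    let A : Matrix (Fin 5) (Fin 5) ℂ :=
      !![0, 0, 1, 0, 0;
         0, 0, 0, (b : ℂ), ((t * c : ℝ) : ℂ);
         0, 0, 0, (c : ℂ), ((-(t * b) : ℝ) : ℂ);
         0, 0, 0, 0, (s : ℂ);
         0, 0, 0, 0, 0]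
    let M : Matrix (Fin 5) (Fin 5) ℂ :=
      (1 / 2 : ℂ) • (Complex.exp (-(θ : ℂ) * Complex.I) • A +
        (Complex.exp (-(θ : ℂ) * Complex.I) • A)ᴴ)
    Eq (-M.charpoly)
      (-X ^ 5 + C (3 / 4 : ℂ) * X ^ 3
        - C (((1 / 16 * (c ^ 2 * t ^ 2 + b ^ 2 + 1) : ℝ)) : ℂ) * X
        - C (((1 / 16 * (b * c * s * t * Real.cos θ) : ℝ)) : ℂ)) :=
  kippenhahn_poly_5x5_general b c s t θ hst hbc
end

section
/- If b c s t = 0 for the matrix A = [[0,0,1,0,0],[0,0,0,b,tc],[0,0,0,c,−tb],[0,0,0,0,s],[0,0,0,0,0]] (with b,c,s,t ≥ 0, s²+t²=1, b²+c²=1), then for every real θ the characteristic polynomial of Re(e^{−iθ}A) factors as −λ(λ² − 3/8 + (1/8)√(5 − 4(b² + c²t²)))(λ² − 3/8 − (1/8)√(5 − 4(b² + c²t²))). -/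
/-!
Writing `ζ = e^{-iθ}/2`, the matrix `Re(e^{-iθ}A)` is `ζ • A + ζ̄ • Aᵀ`, because `A` has real
entries. For any matrix `A` with the sparsity pattern of the theorem, the characteristic polynomial
of `z • A + w • Aᵀ` depends on `z, w` only through `zw` and `z + w`, and `z + w` only multiplies
the coefficients of `λ²` and `λ⁰`. For the given `A` the first vanishes identically and the second
is a multiple of `bcst`; since `ζζ̄ = 1/4`, what is left is the odd polynomial
`λ⁵ - (3/4)λ³ + ((1 + b² + c²t²)/16)λ`, which is `λ((λ² - 3/8)² - r²)` with
`r = √(5 - 4(b² + c²t²))/8`.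
-/

open Matrix

section
variable {R : Type*} [CommRing R]

def strictUpperFin5 (a b g d e s : R) : Matrix (Fin 5) (Fin 5) R :=
  !![0, 0, a, 0, 0; 0, 0, 0, b, g; 0, 0, 0, d, e; 0, 0, 0, 0, s; 0, 0, 0, 0, 0]

open Polynomial in
theorem charpoly_smul_strictUpperFin5_add_smul_transpose (z w a b g d e s : R) :
    (z • strictUpperFin5 a b g d e s + w • (strictUpperFin5 a b g d e s)ᵀ).charpoly =
      X ^ 5 - C (z * w * (a ^ 2 + b ^ 2 + g ^ 2 + d ^ 2 + e ^ 2 + s ^ 2)) * X ^ 3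
        - C (z * w * (z + w) * (b * g + d * e) * s) * X ^ 2
        + C ((z * w) ^ 2 * ((b * e - g * d) ^ 2 + a ^ 2 * (b ^ 2 + g ^ 2 + s ^ 2))) * X
        + C ((z * w) ^ 2 * (z + w) * a ^ 2 * b * g * s) := by
  rw [strictUpperFin5, Matrix.charpoly, Matrix.det_succ_row_zero]
  simp [Fin.sum_univ_succ, Matrix.det_succ_row_zero, Fin.succAbove, charmatrix_apply]
  norm_num [Fin.lt_def, Fin.le_def]
  ring

end

theorem conjTranspose_strictUpperFin5_ofReal (a b g d e s : ℝ) :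
    (strictUpperFin5 (a : ℂ) b g d e s)ᴴ = (strictUpperFin5 (a : ℂ) b g d e s)ᵀ := by
  ext i j
  fin_cases i <;> fin_cases j <;> simp [strictUpperFin5]

theorem exp_ofReal_mul_I_mul_star (θ : ℝ) :
    Complex.exp (θ * Complex.I) * star (Complex.exp (θ * Complex.I)) = 1 := by
  rw [Complex.star_def, Complex.mul_conj, Complex.normSq_eq_norm_sq, Complex.norm_exp_ofReal_mul_I]
  norm_num

open Polynomial in
theorem X_mul_sq_sub_add_mul_sq_sub_sub {R : Type*} [CommRing R] {p₃ p₂ p₁ p₀ q r : R}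
    (h₃ : p₃ = 2 * q) (h₂ : p₂ = 0) (h₁ : p₁ = q ^ 2 - r ^ 2) (h₀ : p₀ = 0) :
    X ^ 5 - C p₃ * X ^ 3 - C p₂ * X ^ 2 + C p₁ * X + C p₀ =
      X * (X ^ 2 - C q + C r) * (X ^ 2 - C q - C r) := by
  subst h₃ h₂ h₁ h₀
  simp only [map_mul, map_sub, map_pow, map_ofNat, map_zero]
  ring

open Polynomial in
theorem kippenhahn_poly_5x5_circular_factorization_general (b c s t θ : ℝ)
    (hst : s ^ 2 + t ^ 2 = 1) (hbc : b ^ 2 + c ^ 2 = 1)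
    (h0 : b * c * s * t = 0) :
    let A : Matrix (Fin 5) (Fin 5) ℂ :=
      !![0, 0, 1, 0, 0;
         0, 0, 0, (b : ℂ), ((t * c : ℝ) : ℂ);
         0, 0, 0, (c : ℂ), ((-(t * b) : ℝ) : ℂ);
         0, 0, 0, 0, (s : ℂ);
         0, 0, 0, 0, 0]
    let M : Matrix (Fin 5) (Fin 5) ℂ :=
      (1 / 2 : ℂ) • (Complex.exp (-(θ : ℂ) * Complex.I) • A +
        (Complex.exp (-(θ : ℂ) * Complex.I) • A)ᴴ)
    Eq (-M.charpoly)
      (-(X * (X ^ 2 - C (3 / 8 : ℂ)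
          + C (((1 / 8 * Real.sqrt (5 - 4 * (b ^ 2 + c ^ 2 * t ^ 2)) : ℝ)) : ℂ))
        * (X ^ 2 - C (3 / 8 : ℂ)
          - C (((1 / 8 * Real.sqrt (5 - 4 * (b ^ 2 + c ^ 2 * t ^ 2)) : ℝ)) : ℂ)))) := by
  intro A M
  set z := Complex.exp (-(θ : ℂ) * Complex.I)
  have hA : A = strictUpperFin5 ((1 : ℝ) : ℂ) b (t * c : ℝ) c (-(t * b) : ℝ) s := by
    simp [A, strictUpperFin5]
  have hM : M = (z / 2) • A + (star z / 2) • Aᵀ := by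
    simp only [M, conjTranspose_smul, hA, conjTranspose_strictUpperFin5_ofReal, smul_add, smul_smul]
    congr 2 <;> ring
  have hzw : z / 2 * (star z / 2) = 1 / 4 := by
    have := exp_ofReal_mul_I_mul_star (-θ)
    push_cast at this
    linear_combination this / 4
  rw [neg_inj, hM, hA, charpoly_smul_strictUpperFin5_add_smul_transpose, hzw]
  have hbc' : (b : ℂ) ^ 2 + c ^ 2 = 1 := by exact_mod_cast hbc
  have hst' : (s : ℂ) ^ 2 + t ^ 2 = 1 := by exact_mod_cast hst
  have h0' : (b : ℂ) * c * s * t = 0 := by exact_mod_cast h0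
  have hr : ((√(5 - 4 * (b ^ 2 + c ^ 2 * t ^ 2)) : ℝ) : ℂ) ^ 2
      = 5 - 4 * (b ^ 2 + c ^ 2 * t ^ 2) := by
    have : 0 ≤ 5 - 4 * (b ^ 2 + c ^ 2 * t ^ 2) := by nlinarith [sq_nonneg c, sq_nonneg s]
    exact_mod_cast Real.sq_sqrt this
  apply X_mul_sq_sub_add_mul_sq_sub_sub <;> push_cast
  · linear_combination (1 / 4 + t ^ 2 / 4 : ℂ) * hbc' + (1 / 4 : ℂ) * hst'
  · ring
  · linear_combination (1 / 64 : ℂ) * hr + (t ^ 2 * (b ^ 2 + c ^ 2 + 1) / 16 : ℂ) * hbc'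
      + (1 / 16 : ℂ) * hst'
  · linear_combination (z / 2 + star z / 2) / 16 * h0'

open Polynomial in
theorem kippenhahn_poly_5x5_circular_factorization (b c s t θ : ℝ)
    (hb : 0 ≤ b) (hc : 0 ≤ c) (hs : 0 ≤ s) (ht : 0 ≤ t)
    (hst : s ^ 2 + t ^ 2 = 1) (hbc : b ^ 2 + c ^ 2 = 1)
    (h0 : b * c * s * t = 0) :
    let A : Matrix (Fin 5) (Fin 5) ℂ :=
      !![0, 0, 1, 0, 0;
         0, 0, 0, (b : ℂ), ((t * c : ℝ) : ℂ);
         0, 0, 0, (c : ℂ), ((-(t * b) : ℝ) : ℂ);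
         0, 0, 0, 0, (s : ℂ);
         0, 0, 0, 0, 0]
    let M : Matrix (Fin 5) (Fin 5) ℂ :=
      (1 / 2 : ℂ) • (Complex.exp (-(θ : ℂ) * Complex.I) • A +
        (Complex.exp (-(θ : ℂ) * Complex.I) • A)ᴴ)
    Eq (-M.charpoly)
      (-(X * (X ^ 2 - C (3 / 8 : ℂ)
          + C (((1 / 8 * Real.sqrt (5 - 4 * (b ^ 2 + c ^ 2 * t ^ 2)) : ℝ)) : ℂ))
        * (X ^ 2 - C (3 / 8 : ℂ)
          - C (((1 / 8 * Real.sqrt (5 - 4 * (b ^ 2 + c ^ 2 * t ^ 2)) : ℝ)) : ℂ)))) :=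
  kippenhahn_poly_5x5_circular_factorization_general b c s t θ hst hbc h0
end

section
/- If b c s t = 0 for the 5-by-5 matrix A = [[0,0,1,0,0],[0,0,0,b,tc],[0,0,0,c,−tb],[0,0,0,0,s],[0,0,0,0,0]] (constraints b,c,s,t ≥ 0, s²+t²=1, b²+c²=1), then the numerical range W(A) is the closed circular disk centered at 0 of radius (1/2)√((3 + √(5 − 4(b² + c²t²)))/2). -/
/-!
`A` is the complexification of a real matrix `B`. Since `b c s t = 0`, the nonzero entries of `B`
respect a grading `w` of the coordinates (`B i j ≠ 0 → w j = w i + 1`), so conjugating by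
`diag (u ^ w i)` shows that `W(A)` is invariant under the rotations `z ↦ u z`, `|u| = 1`. Being
connected, rotation invariant and containing `A 0 0 = 0`, `W(A)` is the closed disc of radius
`max Re W(A) = max ⟨y, B y⟩ / |y|²` over real `y ≠ 0`.

For `μ² = (3 + √(5 - 4(b² + c²t²))) / 2`, the largest root of `μ⁴ - 3μ² + 1 + b² + c²t²`,
completing squares writes `μ (μ² - 1) (μ |y|² - 2 ⟨y, B y⟩)` as a sum of squares plus a binary
form in `(y₃, y₄)` whose discriminant is a multiple of `b c s t`. That form is therefore
semidefinite and degenerate, so the maximum is `μ / 2`.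
-/

/-- The numerical range of a matrix: `{⟨Ax, x⟩ : ‖x‖ = 1}` (in Mathlib's convention,
`⟨Ax, x⟩ = inner x (Ax)` since `inner` is conjugate-linear in its first argument). -/
noncomputable def numRange {n : ℕ} (A : Matrix (Fin n) (Fin n) ℂ) : Set ℂ :=
  {z | ∃ x : EuclideanSpace ℂ (Fin n), ‖x‖ = 1 ∧ (inner ℂ x (Matrix.toEuclideanLin A x) : ℂ) = z}

open scoped ComplexConjugate
open Matrix

def Matrix.IsGradedBy {ι R : Type*} [Zero R] (A : Matrix ι ι R) (w : ι → ℕ) : Prop :=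
  ∀ i j, A i j ≠ 0 → w j = w i + 1

lemma Matrix.IsGradedBy.map {ι R S : Type*} [Zero R] [Zero S] {A : Matrix ι ι R} {w : ι → ℕ}
    (hA : A.IsGradedBy w) {f : R → S} (hf : f 0 = 0) : (A.map f).IsGradedBy w :=
  fun i j hij => hA i j fun h => hij (by simp [h, hf])

section NumRange

variable {n : ℕ}

lemma inner_toEuclideanLin_self (A : Matrix (Fin n) (Fin n) ℂ) (x : EuclideanSpace ℂ (Fin n)) :
    inner ℂ x (A.toEuclideanLin x) = ∑ i, ∑ j, conj (x i) * A i j * x j := by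
  simp [PiLp.inner_apply, toLpLin_apply, mulVec, dotProduct, Finset.mul_sum, mul_comm,
    mul_left_comm, mul_assoc]

lemma isConnected_numRange (hn : 0 < n) (A : Matrix (Fin n) (Fin n) ℂ) :
    IsConnected (numRange A) := by
  have hrank : 1 < Module.rank ℝ (EuclideanSpace ℂ (Fin n)) := by
    rw [← Module.finrank_eq_rank, ← Module.finrank_mul_finrank ℝ ℂ]
    simp only [finrank_euclideanSpace_fin, Complex.finrank_real_complex]
    exact_mod_cast (by omega : 1 < 2 * n)
  have : numRange A = (fun x => inner ℂ x (A.toEuclideanLin x)) '' Metric.sphere 0 1 := by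
    ext z; simp [numRange]
  rw [this]
  exact (isConnected_sphere hrank 0 zero_le_one).image _ (by fun_prop)

lemma diag_mem_numRange (A : Matrix (Fin n) (Fin n) ℂ) (i : Fin n) : A i i ∈ numRange A :=
  ⟨EuclideanSpace.single i 1, by simp, by simp [inner_toEuclideanLin_self]⟩

lemma Matrix.IsGradedBy.mul_mem_numRange {A : Matrix (Fin n) (Fin n) ℂ} {w : Fin n → ℕ}
    (hA : A.IsGradedBy w) {u z : ℂ} (hu : ‖u‖ = 1) (hz : z ∈ numRange A) :
    u * z ∈ numRange A := by
  obtain ⟨x, hx, rfl⟩ := hz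
  have huu : conj u * u = 1 := by
    rw [Complex.conj_mul', hu]; simp
  have hentry : ∀ i j, conj (u ^ w i) * A i j * u ^ w j = u * A i j := by
    intro i j
    by_cases hij : A i j = 0
    · simp [hij]
    · rw [hA i j hij, map_pow, pow_succ]
      calc conj u ^ w i * A i j * (u ^ w i * u) = (conj u * u) ^ w i * (u * A i j) := by ring
        _ = u * A i j := by rw [huu, one_pow, one_mul]
  refine ⟨WithLp.toLp 2 fun i => u ^ w i * x i, ?_, ?_⟩
  · simpa [EuclideanSpace.norm_eq, norm_mul, norm_pow, hu] using hx
  · simp only [inner_toEuclideanLin_self, Finset.mul_sum]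
    refine Finset.sum_congr rfl fun i _ => Finset.sum_congr rfl fun j _ => ?_
    simp only [map_mul]
    linear_combination (conj (x i) * x j) * hentry i j

variable (B : Matrix (Fin n) (Fin n) ℝ)

lemma inner_toEuclideanLin_map_ofReal_ofReal (y : Fin n → ℝ) :
    inner ℂ (WithLp.toLp 2 fun i => (y i : ℂ))
        ((B.map (↑)).toEuclideanLin (WithLp.toLp 2 fun i => (y i : ℂ)))
      = ((y ⬝ᵥ (B *ᵥ y) : ℝ) : ℂ) := by
  rw [inner_toEuclideanLin_self]
  simp [dotProduct, mulVec, Finset.mul_sum, mul_assoc]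

lemma re_inner_toEuclideanLin_map_ofReal (x : EuclideanSpace ℂ (Fin n)) :
    (inner ℂ x ((B.map (↑)).toEuclideanLin x)).re
      = (fun i => (x i).re) ⬝ᵥ (B *ᵥ fun i => (x i).re)
        + (fun i => (x i).im) ⬝ᵥ (B *ᵥ fun i => (x i).im) := by
  rw [inner_toEuclideanLin_self]
  simp [dotProduct, mulVec, Finset.mul_sum, Complex.mul_re, ← Finset.sum_add_distrib, mul_assoc]

lemma re_le_of_mem_numRange_map_ofReal {r : ℝ} (hB : ∀ y, y ⬝ᵥ (B *ᵥ y) ≤ r * (y ⬝ᵥ y))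
    {z : ℂ} (hz : z ∈ numRange (B.map (↑))) : z.re ≤ r := by
  obtain ⟨x, hx, rfl⟩ := hz
  have hnorm : (fun i => (x i).re) ⬝ᵥ (fun i => (x i).re)
      + (fun i => (x i).im) ⬝ᵥ (fun i => (x i).im) = 1 := by
    have := congrArg (· ^ 2) hx
    simp only [EuclideanSpace.norm_sq_eq, Complex.sq_norm, Complex.normSq_apply, one_pow] at this
    simpa [dotProduct, ← Finset.sum_add_distrib] using this
  rw [re_inner_toEuclideanLin_map_ofReal]
  calc _ ≤ r * ((fun i => (x i).re) ⬝ᵥ (fun i => (x i).re))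
        + r * ((fun i => (x i).im) ⬝ᵥ (fun i => (x i).im)) := add_le_add (hB _) (hB _)
    _ = r := by rw [← mul_add, hnorm, mul_one]

lemma ofReal_mem_numRange_map_ofReal {r : ℝ} {y : Fin n → ℝ} (hy : y ≠ 0)
    (hBy : y ⬝ᵥ (B *ᵥ y) = r * (y ⬝ᵥ y)) : (r : ℂ) ∈ numRange (B.map (↑)) := by
  have hpos : 0 < y ⬝ᵥ y := (Finset.sum_nonneg fun i _ => mul_self_nonneg (y i)).lt_of_ne'
    (dotProduct_self_eq_zero.not.mpr hy)
  set c := (√(y ⬝ᵥ y))⁻¹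
  have hc : c ^ 2 * (y ⬝ᵥ y) = 1 := by
    rw [inv_pow, Real.sq_sqrt hpos.le, inv_mul_cancel₀ hpos.ne']
  refine ⟨WithLp.toLp 2 fun i => ((c • y) i : ℂ), ?_, ?_⟩
  · rw [EuclideanSpace.norm_eq, Real.sqrt_eq_one, ← hc]
    simp only [Pi.smul_apply, smul_eq_mul, Complex.norm_real, Real.norm_eq_abs, sq_abs,
      dotProduct, Finset.mul_sum]
    exact Finset.sum_congr rfl fun i _ => by ring
  · rw [inner_toEuclideanLin_map_ofReal_ofReal, mulVec_smul, dotProduct_smul, smul_dotProduct,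
      hBy]
    congr 1
    linear_combination r * hc

end NumRange

lemma Complex.norm_le_of_forall_mul_mem {S : Set ℂ} {r : ℝ}
    (hrot : ∀ u z, ‖u‖ = 1 → z ∈ S → u * z ∈ S) (hre : ∀ z ∈ S, z.re ≤ r) {z : ℂ}
    (hz : z ∈ S) : ‖z‖ ≤ r := by
  rcases eq_or_ne z 0 with rfl | hz0
  · simpa using hre 0 hz
  have hnorm : (‖z‖ : ℂ) ≠ 0 := by simpa using hz0
  have hu : ‖conj z / ‖z‖‖ = 1 := by simp [hz0]
  have hturn : conj z / ‖z‖ * z = ‖z‖ := by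
    rw [div_mul_eq_mul_div, Complex.conj_mul', sq, mul_div_cancel_right₀ _ hnorm]
  simpa [hturn] using hre _ (hrot _ z hu hz)

lemma Complex.eq_closedBall_of_isConnected {S : Set ℂ} {r : ℝ} (hS : IsConnected S)
    (hrot : ∀ u z, ‖u‖ = 1 → z ∈ S → u * z ∈ S) (h0 : 0 ∈ S) (hr : (r : ℂ) ∈ S)
    (hre : ∀ z ∈ S, z.re ≤ r) : S = Metric.closedBall 0 r := by
  have hle := fun z (hz : z ∈ S) => Complex.norm_le_of_forall_mul_mem hrot hre hz
  refine Set.Subset.antisymm (fun z hz => by simpa using hle z hz) fun z hz => ?_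
  have hr0 : 0 ≤ r := (norm_nonneg _).trans (hle _ hr)
  have hIcc : Set.Icc 0 r ⊆ norm '' S :=
    (hS.isPreconnected.image _ continuous_norm.continuousOn).Icc_subset ⟨0, h0, norm_zero⟩
      ⟨r, hr, by simp [hr0]⟩
  obtain ⟨y, hy, hyz⟩ := hIcc ⟨norm_nonneg z, by simpa using hz⟩
  rcases eq_or_ne z 0 with rfl | hz0
  · exact h0
  have hy0 : y ≠ 0 := by rintro rfl; simp [eq_comm, hz0] at hyz
  have : z / y * y = z := div_mul_cancel₀ z hy0
  exact this ▸ hrot _ _ (by simp [hyz, hz0]) hy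

lemma binary_quadratic_nonneg {a β g : ℝ} (ha : 0 ≤ a) (hg : 0 ≤ g) (hβ : β ^ 2 = a * g)
    (p q : ℝ) : 0 ≤ a * p ^ 2 + 2 * β * p * q + g * q ^ 2 := by
  rcases ha.eq_or_lt with rfl | ha
  · obtain rfl : β = 0 := by simpa using hβ
    simp only [zero_mul, mul_zero, zero_add]
    positivity
  · have : a * (a * p ^ 2 + 2 * β * p * q + g * q ^ 2) = (a * p + β * q) ^ 2 := by
      linear_combination -q ^ 2 * hβ
    nlinarith [sq_nonneg (a * p + β * q)]

lemma exists_binary_quadratic_eq_zero {a β g : ℝ} (hβ : β ^ 2 = a * g) :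
    ∃ p q : ℝ, (p ≠ 0 ∨ q ≠ 0) ∧ a * p ^ 2 + 2 * β * p * q + g * q ^ 2 = 0 := by
  rcases eq_or_ne a 0 with rfl | ha
  · exact ⟨1, 0, Or.inl one_ne_zero, by simp⟩
  · exact ⟨-β, a, Or.inr ha, by linear_combination -a * hβ⟩

lemma quartic_of_eq_sqrt {m μ : ℝ} (hm : m ≤ 1) (hμ : μ = √((3 + √(5 - 4 * m)) / 2)) :
    0 < μ ∧ 2 ≤ μ ^ 2 ∧ μ ^ 4 - 3 * μ ^ 2 + 1 + m = 0 := by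
  have hα : √(5 - 4 * m) ^ 2 = 5 - 4 * m := Real.sq_sqrt (by linarith)
  have hα1 : 1 ≤ √(5 - 4 * m) := Real.le_sqrt_of_sq_le (by linarith)
  have hμsq : μ ^ 2 = (3 + √(5 - 4 * m)) / 2 := hμ ▸ Real.sq_sqrt (by linarith)
  refine ⟨hμ ▸ Real.sqrt_pos.2 (by linarith), by linarith, ?_⟩
  linear_combination (μ ^ 2 + (3 + √(5 - 4 * m)) / 2 - 3) * hμsq + hα / 4

def realA (b c s t : ℝ) : Matrix (Fin 5) (Fin 5) ℝ :=
  !![0, 0, 1, 0, 0;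
     0, 0, 0, b, t * c;
     0, 0, 0, c, -(t * b);
     0, 0, 0, 0, s;
     0, 0, 0, 0, 0]

section RealA

variable {b c s t μ : ℝ}

lemma exists_isGradedBy_realA (h0 : b * c * s * t = 0) : ∃ w, (realA b c s t).IsGradedBy w := by
  simp only [mul_eq_zero] at h0
  rcases h0 with ((rfl | rfl) | rfl) | rfl
  · exact ⟨![0, 2, 1, 2, 3], fun i j => by fin_cases i <;> fin_cases j <;> simp [realA]⟩
  · exact ⟨![0, 0, 1, 1, 2], fun i j => by fin_cases i <;> fin_cases j <;> simp [realA]⟩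
  · exact ⟨![0, 1, 1, 2, 2], fun i j => by fin_cases i <;> fin_cases j <;> simp [realA]⟩
  · exact ⟨![0, 1, 1, 2, 3], fun i j => by fin_cases i <;> fin_cases j <;> simp [realA]⟩

lemma dotProduct_realA_mulVec (y : Fin 5 → ℝ) :
    y ⬝ᵥ (realA b c s t *ᵥ y) = y 0 * y 2 + b * y 1 * y 3 + t * c * y 1 * y 4 + c * y 2 * y 3
      - t * b * y 2 * y 4 + s * y 3 * y 4 := by
  simp only [dotProduct, mulVec, realA, of_apply, cons_val', cons_val_fin_one, Fin.sum_univ_five,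
    cons_val_zero, cons_val_one, cons_val, zero_mul, add_zero, one_mul, zero_add, neg_mul, mul_zero]
  ring

lemma realA_gap_eq_sum_sq (hbc : b ^ 2 + c ^ 2 = 1) (hst : s ^ 2 + t ^ 2 = 1)
    (hμ : μ ^ 4 - 3 * μ ^ 2 + 1 + (b ^ 2 + c ^ 2 * t ^ 2) = 0) (y : Fin 5 → ℝ) :
    μ * (μ ^ 2 - 1) * (μ * (y ⬝ᵥ y) - 2 * (y ⬝ᵥ (realA b c s t *ᵥ y)))
      = (μ ^ 2 - 1) * (μ * y 0 - y 2) ^ 2 + (μ ^ 2 - 1) * (μ * y 1 - b * y 3 - t * c * y 4) ^ 2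
        + ((μ ^ 2 - 1) * y 2 - μ * (c * y 3 - t * b * y 4)) ^ 2
        + ((μ ^ 2 - 1 - c ^ 2 * t ^ 2) * y 3 ^ 2
          + 2 * (b * t * c - s * μ * (μ ^ 2 - 1)) * y 3 * y 4
          + ((1 + s ^ 2) * μ ^ 2 - 1 - b ^ 2) * y 4 ^ 2) := by
  rw [dotProduct_realA_mulVec]
  simp only [dotProduct, Fin.sum_univ_five]
  linear_combination (y 3 ^ 2 + y 4 ^ 2) * hμ - μ ^ 2 * (y 3 ^ 2 + t ^ 2 * y 4 ^ 2) * hbc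
    - μ ^ 2 * y 4 ^ 2 * hst

lemma realA_discrim_eq_zero (hbc : b ^ 2 + c ^ 2 = 1) (hst : s ^ 2 + t ^ 2 = 1)
    (h0 : b * c * s * t = 0) (hμ : μ ^ 4 - 3 * μ ^ 2 + 1 + (b ^ 2 + c ^ 2 * t ^ 2) = 0) :
    (b * t * c - s * μ * (μ ^ 2 - 1)) ^ 2
      = (μ ^ 2 - 1 - c ^ 2 * t ^ 2) * ((1 + s ^ 2) * μ ^ 2 - 1 - b ^ 2) := by
  linear_combination (s ^ 2 * μ ^ 2 - 1) * hμ - 2 * μ * (μ ^ 2 - 1) * h0 + μ ^ 2 * t ^ 2 * hbc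
    + μ ^ 2 * (1 - b ^ 2) * hst

lemma dotProduct_realA_mulVec_le (hbc : b ^ 2 + c ^ 2 = 1) (hst : s ^ 2 + t ^ 2 = 1)
    (h0 : b * c * s * t = 0) (hμ : μ ^ 4 - 3 * μ ^ 2 + 1 + (b ^ 2 + c ^ 2 * t ^ 2) = 0)
    (hμ0 : 0 < μ) (hμ2 : 2 ≤ μ ^ 2) (y : Fin 5 → ℝ) :
    y ⬝ᵥ (realA b c s t *ᵥ y) ≤ μ / 2 * (y ⬝ᵥ y) := by
  have htail := binary_quadratic_nonneg
    (by nlinarith [sq_nonneg s, sq_nonneg b, mul_nonneg (sq_nonneg c) (sq_nonneg s)])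
    (by nlinarith [sq_nonneg s, sq_nonneg c]) (realA_discrim_eq_zero hbc hst h0 hμ) (y 3) (y 4)
  have h1 : 0 < μ ^ 2 - 1 := by linarith
  have hgap : 0 ≤ μ * (μ ^ 2 - 1) * (μ * (y ⬝ᵥ y) - 2 * (y ⬝ᵥ (realA b c s t *ᵥ y))) := by
    rw [realA_gap_eq_sum_sq hbc hst hμ]
    exact add_nonneg (by positivity) htail
  linarith [(mul_nonneg_iff_of_pos_left (by positivity)).1 hgap]

lemma exists_dotProduct_realA_mulVec_eq (hbc : b ^ 2 + c ^ 2 = 1) (hst : s ^ 2 + t ^ 2 = 1)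
    (h0 : b * c * s * t = 0) (hμ : μ ^ 4 - 3 * μ ^ 2 + 1 + (b ^ 2 + c ^ 2 * t ^ 2) = 0)
    (hμ2 : 2 ≤ μ ^ 2) : ∃ y ≠ 0, y ⬝ᵥ (realA b c s t *ᵥ y) = μ / 2 * (y ⬝ᵥ y) := by
  obtain ⟨p, q, hpq, hform⟩ :=
    exists_binary_quadratic_eq_zero (realA_discrim_eq_zero hbc hst h0 hμ)
  have hD : μ * (μ ^ 2 - 1) ≠ 0 := mul_ne_zero (by rintro rfl; norm_num at hμ2) (by linarith)
  -- the vector making every square in `realA_gap_eq_sum_sq` vanish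
  set y : Fin 5 → ℝ := ![μ * (c * p - t * b * q), (μ ^ 2 - 1) * (b * p + t * c * q),
    μ ^ 2 * (c * p - t * b * q), μ * (μ ^ 2 - 1) * p, μ * (μ ^ 2 - 1) * q]
  have hgap : μ * (μ ^ 2 - 1) * (μ * (y ⬝ᵥ y) - 2 * (y ⬝ᵥ (realA b c s t *ᵥ y))) = 0 := by
    rw [realA_gap_eq_sum_sq hbc hst hμ]
    simp only [cons_val_zero, cons_val, cons_val_one, y]
    linear_combination (μ ^ 2 * (μ ^ 2 - 1) ^ 2) * hform
  refine ⟨y, fun hy => ?_, by linarith [(mul_eq_zero.1 hgap).resolve_left hD]⟩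
  have h3 : μ * (μ ^ 2 - 1) * p = 0 := congrFun hy 3
  have h4 : μ * (μ ^ 2 - 1) * q = 0 := congrFun hy 4
  rcases hpq with hp | hq
  · exact hp ((mul_eq_zero.1 h3).resolve_left hD)
  · exact hq ((mul_eq_zero.1 h4).resolve_left hD)

end RealA

theorem numRange_5x5_circular_general (b c s t : ℝ)
    (hst : s ^ 2 + t ^ 2 = 1) (hbc : b ^ 2 + c ^ 2 = 1)
    (h0 : b * c * s * t = 0) :
    let A : Matrix (Fin 5) (Fin 5) ℂ :=
      !![0, 0, 1, 0, 0;
         0, 0, 0, (b : ℂ), ((t * c : ℝ) : ℂ);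
         0, 0, 0, (c : ℂ), ((-(t * b) : ℝ) : ℂ);
         0, 0, 0, 0, (s : ℂ);
         0, 0, 0, 0, 0]
    numRange A = Metric.closedBall (0 : ℂ)
      (1 / 2 * Real.sqrt ((3 + Real.sqrt (5 - 4 * (b ^ 2 + c ^ 2 * t ^ 2))) / 2)) := by
  intro A
  have hA : A = (realA b c s t).map (↑) := by
    ext i j; fin_cases i <;> fin_cases j <;> simp [A, realA]
  set μ := √((3 + √(5 - 4 * (b ^ 2 + c ^ 2 * t ^ 2))) / 2)
  obtain ⟨hμ0, hμ2, hμ⟩ := quartic_of_eq_sqrt (m := b ^ 2 + c ^ 2 * t ^ 2)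
    (by nlinarith [sq_nonneg s, sq_nonneg c]) rfl
  obtain ⟨w, hw⟩ := exists_isGradedBy_realA h0
  obtain ⟨y, hy, hyμ⟩ := exists_dotProduct_realA_mulVec_eq hbc hst h0 hμ hμ2
  rw [hA, one_div_mul_eq_div]
  exact Complex.eq_closedBall_of_isConnected (isConnected_numRange (by norm_num) _)
    (fun u z hu hz => (hw.map Complex.ofReal_zero).mul_mem_numRange hu hz)
    (by simpa [realA] using diag_mem_numRange ((realA b c s t).map (↑)) 0)
    (ofReal_mem_numRange_map_ofReal _ hy hyμ)
    (fun z hz => re_le_of_mem_numRange_map_ofReal _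
      (dotProduct_realA_mulVec_le hbc hst h0 hμ hμ0 hμ2) hz)

theorem numRange_5x5_circular (b c s t : ℝ)
    (hb : 0 ≤ b) (hc : 0 ≤ c) (hs : 0 ≤ s) (ht : 0 ≤ t)
    (hst : s ^ 2 + t ^ 2 = 1) (hbc : b ^ 2 + c ^ 2 = 1)
    (h0 : b * c * s * t = 0) :
    let A : Matrix (Fin 5) (Fin 5) ℂ :=
      !![0, 0, 1, 0, 0;
         0, 0, 0, (b : ℂ), ((t * c : ℝ) : ℂ);
         0, 0, 0, (c : ℂ), ((-(t * b) : ℝ) : ℂ);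
         0, 0, 0, 0, (s : ℂ);
         0, 0, 0, 0, 0]
    numRange A = Metric.closedBall (0 : ℂ)
      (1 / 2 * Real.sqrt ((3 + Real.sqrt (5 - 4 * (b ^ 2 + c ^ 2 * t ^ 2))) / 2)) :=
  numRange_5x5_circular_general b c s t hst hbc h0
end

section
/- Let A = [[0,0,1,0,0],[0,0,0,b,tc],[0,0,0,c,−tb],[0,0,0,0,s],[0,0,0,0,0]] with b,c,s,t ≥ 0, s²+t²=1, b²+c²=1, and b c s t ≠ 0. Then W(A) is not a circular disk centered at 0; in particular, the maximum eigenvalue of Re(A) differs from the maximum eigenvalue of Im(A). -/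
/-!
For Hermitian `M`, `maxEig M` is the largest value of `re ⟪x, M x⟫` on the unit sphere. Since
`re ⟪x, Re(A) x⟫ = re ⟪x, A x⟫` and `Im(A) = Re(-i A)`, the numbers `maxEig (Re A)` and
`maxEig (Im A)` are the largest real part and the largest imaginary part of a point of `W(A)`;
if `W(A)` were a disc centred at `0`, both would be its radius. For the matrix at hand, however,
`det (z - Re A) - det (z - Im A)` is the nonzero constant `b c s t / 16`, so the characteristic
polynomials of `Re A` and `Im A` have no common root.
-/

open Matrix

/-- The largest real eigenvalue of a matrix. -/
noncomputable def maxEig {n : ℕ} (M : Matrix (Fin n) (Fin n) ℂ) : ℝ :=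
  sSup {r : ℝ | (r : ℂ) ∈ spectrum ℂ M}

open Complex

section

variable {n : ℕ}

theorem numRange_eq_image_sphere (A : Matrix (Fin n) (Fin n) ℂ) :
    numRange A = (fun x => inner ℂ x (toEuclideanLin A x)) '' Metric.sphere 0 1 := by
  ext z
  simp [numRange]

theorem maxEig_eq_sSup_spectrum (M : Matrix (Fin n) (Fin n) ℂ) :
    maxEig M = sSup (spectrum ℝ M) :=
  congrArg sSup (spectrum.preimage_algebraMap ℂ)

namespace Matrix.IsHermitian

variable {M : Matrix (Fin n) (Fin n) ℂ}

theorem isGreatest_spectrum_maxEig [NeZero n] (hM : M.IsHermitian) :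
    IsGreatest (spectrum ℝ M) (maxEig M) := by
  rw [maxEig_eq_sSup_spectrum]
  have hne : (spectrum ℝ M).Nonempty := ⟨_, hM.eigenvalues_mem_spectrum_real 0⟩
  exact ⟨hne.csSup_mem finite_real_spectrum,
    fun r hr => le_csSup finite_real_spectrum.bddAbove hr⟩

open scoped MatrixOrder in
theorem re_inner_le_maxEig_mul (hM : M.IsHermitian) (x : EuclideanSpace ℂ (Fin n)) :
    (inner ℂ x (toEuclideanLin M x)).re ≤ maxEig M * ‖x‖ ^ 2 := by
  have hle : M ≤ algebraMap ℝ _ (maxEig M) := by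
    rw [le_algebraMap_iff_spectrum_le hM.isSelfAdjoint, maxEig_eq_sSup_spectrum]
    exact fun r hr => le_csSup finite_real_spectrum.bddAbove hr
  have h := (le_iff.1 hle).re_dotProduct_nonneg x
  have hx : star (WithLp.ofLp x) ⬝ᵥ WithLp.ofLp x = ((‖x‖ ^ 2 : ℝ) : ℂ) := by
    rw [dotProduct_comm, ← EuclideanSpace.inner_eq_star_dotProduct, inner_self_eq_norm_sq_to_K]
    push_cast
    rfl
  rw [Algebra.algebraMap_eq_smul_one, sub_mulVec, smul_mulVec, one_mulVec, dotProduct_sub,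
    dotProduct_smul, hx] at h
  simp only [map_sub, RCLike.smul_re, RCLike.re_to_complex, ofReal_re] at h
  rw [EuclideanSpace.inner_eq_star_dotProduct, dotProduct_comm]
  exact sub_nonneg.1 h

theorem isGreatest_re_numRange [NeZero n] (hM : M.IsHermitian) :
    IsGreatest (re '' numRange M) (maxEig M) := by
  constructor
  · obtain ⟨i, hi⟩ : maxEig M ∈ Set.range hM.eigenvalues :=
      hM.spectrum_real_eq_range_eigenvalues ▸ hM.isGreatest_spectrum_maxEig.1
    refine ⟨_, ⟨hM.eigenvectorBasis i, hM.eigenvectorBasis.orthonormal.1 i, rfl⟩, ?_⟩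
    rw [← hi, hM.eigenvalues_eq i, EuclideanSpace.inner_eq_star_dotProduct, dotProduct_comm]
    rfl
  · rintro _ ⟨_, ⟨x, hx, rfl⟩, rfl⟩
    simpa [hx] using hM.re_inner_le_maxEig_mul x

theorem det_scalar_maxEig_sub_eq_zero [NeZero n] (hM : M.IsHermitian) :
    det (scalar (Fin n) (maxEig M : ℂ) - M) = 0 := by
  rw [← eval_charpoly]
  exact (mem_spectrum_iff_isRoot_charpoly.1
    (spectrum.algebraMap_mem ℂ hM.isGreatest_spectrum_maxEig.1)).eq_zero

theorem maxEig_ne_of_det_scalar_sub_eq_add [NeZero n] {N : Matrix (Fin n) (Fin n) ℂ}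
    (hM : M.IsHermitian) (hN : N.IsHermitian) {k : ℂ} (hk : k ≠ 0)
    (hdet : ∀ z, det (scalar (Fin n) z - M) = det (scalar (Fin n) z - N) + k) :
    maxEig M ≠ maxEig N := by
  intro h
  have hroot := hdet (maxEig M)
  rw [hM.det_scalar_maxEig_sub_eq_zero, h, hN.det_scalar_maxEig_sub_eq_zero, zero_add] at hroot
  exact hk hroot.symm

end Matrix.IsHermitian

theorem isHermitian_realPart (A : Matrix (Fin n) (Fin n) ℂ) :
    ((1 / 2 : ℂ) • (A + Aᴴ)).IsHermitian :=
  (isHermitian_add_transpose_self A).smul (by simp [IsSelfAdjoint])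

theorem imPart_eq_realPart_neg_I_smul (A : Matrix (Fin n) (Fin n) ℂ) :
    (I / 2) • (Aᴴ - A) = (1 / 2 : ℂ) • (-I • A + (-I • A)ᴴ) := by
  rw [conjTranspose_smul]
  simp only [star_neg, Complex.star_def, conj_I, neg_neg]
  module

theorem isHermitian_imPart (A : Matrix (Fin n) (Fin n) ℂ) :
    ((I / 2) • (Aᴴ - A)).IsHermitian := by
  rw [imPart_eq_realPart_neg_I_smul]
  exact isHermitian_realPart _

theorem re_inner_realPart (A : Matrix (Fin n) (Fin n) ℂ) (x : EuclideanSpace ℂ (Fin n)) :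
    (inner ℂ x (toEuclideanLin ((1 / 2 : ℂ) • (A + Aᴴ)) x)).re =
      (inner ℂ x (toEuclideanLin A x)).re := by
  rw [map_smul, map_add, LinearMap.smul_apply, LinearMap.add_apply, inner_smul_right,
    inner_add_right, toEuclideanLin_conjTranspose_eq_adjoint, LinearMap.adjoint_inner_right,
    ← inner_conj_symm (toEuclideanLin A x) x, add_conj]
  simp

theorem re_image_numRange_realPart (A : Matrix (Fin n) (Fin n) ℂ) :
    re '' numRange ((1 / 2 : ℂ) • (A + Aᴴ)) = re '' numRange A := by
  simp only [numRange_eq_image_sphere, Set.image_image, re_inner_realPart]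

theorem re_image_numRange_neg_I_smul (A : Matrix (Fin n) (Fin n) ℂ) :
    re '' numRange (-I • A) = im '' numRange A := by
  simp [numRange_eq_image_sphere, Set.image_image, inner_smul_right]

theorem isGreatest_re_numRange [NeZero n] (A : Matrix (Fin n) (Fin n) ℂ) :
    IsGreatest (re '' numRange A) (maxEig ((1 / 2 : ℂ) • (A + Aᴴ))) :=
  re_image_numRange_realPart A ▸ (isHermitian_realPart A).isGreatest_re_numRange

theorem isGreatest_im_numRange [NeZero n] (A : Matrix (Fin n) (Fin n) ℂ) :
    IsGreatest (im '' numRange A) (maxEig ((I / 2) • (Aᴴ - A))) := by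
  rw [imPart_eq_realPart_neg_I_smul, ← re_image_numRange_neg_I_smul]
  exact isGreatest_re_numRange _

theorem isGreatest_re_closedBall {r : ℝ} (hr : 0 ≤ r) :
    IsGreatest (re '' Metric.closedBall 0 r) r := by
  refine ⟨⟨r, by simp [abs_of_nonneg hr], rfl⟩, ?_⟩
  rintro _ ⟨z, hz, rfl⟩
  exact (re_le_norm z).trans (mem_closedBall_zero_iff.1 hz)

theorem isGreatest_im_closedBall {r : ℝ} (hr : 0 ≤ r) :
    IsGreatest (im '' Metric.closedBall 0 r) r := by
  refine ⟨⟨r * I, by simp [abs_of_nonneg hr], by simp⟩, ?_⟩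
  rintro _ ⟨z, hz, rfl⟩
  exact (im_le_norm z).trans (mem_closedBall_zero_iff.1 hz)

theorem maxEig_realPart_eq_maxEig_imPart [NeZero n] {A : Matrix (Fin n) (Fin n) ℂ} {r : ℝ}
    (h : numRange A = Metric.closedBall 0 r) :
    maxEig ((1 / 2 : ℂ) • (A + Aᴴ)) = maxEig ((I / 2) • (Aᴴ - A)) := by
  have hre := isGreatest_re_numRange A
  have him := isGreatest_im_numRange A
  rw [h] at hre him
  have hr : 0 ≤ r := Metric.nonempty_closedBall.1 hre.nonempty.of_image
  rw [hre.unique (isGreatest_re_closedBall hr), him.unique (isGreatest_im_closedBall hr)]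

end

def exampleMatrix (b c s t : ℝ) : Matrix (Fin 5) (Fin 5) ℂ :=
  !![0, 0, 1, 0, 0;
     0, 0, 0, (b : ℂ), ((t * c : ℝ) : ℂ);
     0, 0, 0, (c : ℂ), ((-(t * b) : ℝ) : ℂ);
     0, 0, 0, 0, (s : ℂ);
     0, 0, 0, 0, 0]

theorem det_scalar_sub_realPart_exampleMatrix (b c s t : ℝ) (z : ℂ) :
    det (scalar (Fin 5) z - (1 / 2 : ℂ) • (exampleMatrix b c s t + (exampleMatrix b c s t)ᴴ)) =
      det (scalar (Fin 5) z - (I / 2) • ((exampleMatrix b c s t)ᴴ - exampleMatrix b c s t)) +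
        ((b * c * s * t / 16 : ℝ) : ℂ) := by
  simp [exampleMatrix, det_succ_row_zero, Fin.sum_univ_succ, Fin.succAbove]
  ring_nf
  simp only [I_sq, I_pow_four]
  ring

theorem numRange_5x5_not_circular_general (b c s t : ℝ)
    (h0 : b * c * s * t ≠ 0) :
    let A : Matrix (Fin 5) (Fin 5) ℂ :=
      !![0, 0, 1, 0, 0;
         0, 0, 0, (b : ℂ), ((t * c : ℝ) : ℂ);
         0, 0, 0, (c : ℂ), ((-(t * b) : ℝ) : ℂ);
         0, 0, 0, 0, (s : ℂ);
         0, 0, 0, 0, 0]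
    (¬ ∃ r : ℝ, numRange A = Metric.closedBall (0 : ℂ) r) ∧
      maxEig ((1 / 2 : ℂ) • (A + Aᴴ)) ≠ maxEig ((Complex.I / 2) • (Aᴴ - A)) := by
  intro A
  have hne : maxEig ((1 / 2 : ℂ) • (A + Aᴴ)) ≠ maxEig ((I / 2) • (Aᴴ - A)) :=
    (isHermitian_realPart A).maxEig_ne_of_det_scalar_sub_eq_add (isHermitian_imPart A)
      (ofReal_ne_zero.2 (div_ne_zero h0 (by norm_num)))
      (det_scalar_sub_realPart_exampleMatrix b c s t)
  exact ⟨fun ⟨r, hr⟩ => hne (maxEig_realPart_eq_maxEig_imPart hr), hne⟩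

theorem numRange_5x5_not_circular (b c s t : ℝ)
    (hb : 0 ≤ b) (hc : 0 ≤ c) (hs : 0 ≤ s) (ht : 0 ≤ t)
    (hst : s ^ 2 + t ^ 2 = 1) (hbc : b ^ 2 + c ^ 2 = 1)
    (h0 : b * c * s * t ≠ 0) :
    let A : Matrix (Fin 5) (Fin 5) ℂ :=
      !![0, 0, 1, 0, 0;
         0, 0, 0, (b : ℂ), ((t * c : ℝ) : ℂ);
         0, 0, 0, (c : ℂ), ((-(t * b) : ℝ) : ℂ);
         0, 0, 0, 0, (s : ℂ);
         0, 0, 0, 0, 0]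
    (¬ ∃ r : ℝ, numRange A = Metric.closedBall (0 : ℂ) r) ∧
      maxEig ((1 / 2 : ℂ) • (A + Aᴴ)) ≠ maxEig ((Complex.I / 2) • (Aᴴ - A)) :=
  numRange_5x5_not_circular_general b c s t h0
end

section
/- Let A = [[0,0,1,0,0],[0,0,0,1,0],[0,0,0,0,−t],[0,0,0,0,s],[0,0,0,0,0]] (the case c = 0, b = 1 of the family) with s,t > 0, s²+t² = 1. Then A³ = 0, and the span of ξ = [t, −s, 0, 0, −1]ᵀ, Aξ, A²ξ is a nontrivial subspace invariant under both A and A*, so A is unitarily reducible. -/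
/-!
Here `Aξ = (0, 0, t, -s, 0)`, `A²ξ = (t, -s, 0, 0, 0)` and `A³ξ = 0`, so the span `L` of
`ξ, Aξ, A²ξ` is `A`-invariant. The adjoint acts on these vectors by `A*ξ = Aξ`, `A*(A²ξ) = Aξ` and,
because `s² + t² = 1`, `A*(Aξ) = ξ - A²ξ`, so `L` is `A*`-invariant too. It is nonzero since
`ξ ≠ 0`, and proper since it has dimension at most `3 < 5`.
-/

open Matrix

theorem Matrix.mulVec_mem_span_of_forall_mem {R n : Type*} [CommSemiring R] [Fintype n]
    (M : Matrix n n R) {S : Set (n → R)} (h : ∀ x ∈ S, M *ᵥ x ∈ Submodule.span R S) :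
    ∀ v ∈ Submodule.span R S, M *ᵥ v ∈ Submodule.span R S :=
  fun _ hv => (Submodule.span_le (p := (Submodule.span R S).comap M.mulVecLin)).mpr h hv

theorem Matrix.mulVec_mem_span_krylov_three {R n : Type*} [CommSemiring R] [Fintype n]
    (M : Matrix n n R) {v : n → R} (hv : M *ᵥ (M *ᵥ (M *ᵥ v)) = 0) :
    ∀ w ∈ Submodule.span R {v, M *ᵥ v, M *ᵥ (M *ᵥ v)},
      M *ᵥ w ∈ Submodule.span R {v, M *ᵥ v, M *ᵥ (M *ᵥ v)} := by
  refine M.mulVec_mem_span_of_forall_mem ?_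
  rintro x (rfl | rfl | rfl)
  · exact Submodule.subset_span (by simp)
  · exact Submodule.subset_span (by simp)
  · rw [hv]
    exact Submodule.zero_mem _

theorem Submodule.span_triple_ne_top {K V : Type*} [DivisionRing K] [AddCommGroup V] [Module K V]
    (hV : 3 < Module.finrank K V) (x y z : V) : Submodule.span K {x, y, z} ≠ ⊤ := by
  classical
  refine (span_lt_top_of_card_lt_finrank ?_).ne
  calc ({x, y, z} : Set V).toFinset.card = ({x, y, z} : Finset V).card := by simp
    _ ≤ 3 := Finset.card_le_three
    _ < Module.finrank K V := hV

namespace BOneCZero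

variable (s t : ℝ)

def A : Matrix (Fin 5) (Fin 5) ℂ :=
  !![0, 0, 1, 0, 0;
     0, 0, 0, 1, 0;
     0, 0, 0, 0, ((-t : ℝ) : ℂ);
     0, 0, 0, 0, (s : ℂ);
     0, 0, 0, 0, 0]

def ξ : Fin 5 → ℂ := ![(t : ℂ), ((-s : ℝ) : ℂ), 0, 0, -1]

def L : Submodule ℂ (Fin 5 → ℂ) :=
  Submodule.span ℂ {ξ s t, A s t *ᵥ ξ s t, A s t *ᵥ (A s t *ᵥ ξ s t)}

theorem A_pow_three : A s t ^ 3 = 0 := by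
  ext i j
  fin_cases i <;> fin_cases j <;> simp [A, pow_three, mul_apply, Fin.sum_univ_five]

theorem A_mulVec_ξ : A s t *ᵥ ξ s t = ![0, 0, (t : ℂ), -(s : ℂ), 0] := by
  ext i
  fin_cases i <;> simp [A, ξ, mulVec, dotProduct, Fin.sum_univ_five]

theorem A_mulVec_A_mulVec_ξ : A s t *ᵥ (A s t *ᵥ ξ s t) = ![(t : ℂ), -(s : ℂ), 0, 0, 0] := by
  rw [A_mulVec_ξ]
  ext i
  fin_cases i <;> simp [A, mulVec, dotProduct, Fin.sum_univ_five]

theorem conjTranspose_A_mulVec_ξ : (A s t)ᴴ *ᵥ ξ s t = A s t *ᵥ ξ s t := by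
  rw [A_mulVec_ξ]
  ext i
  fin_cases i <;> simp [A, ξ, mulVec, dotProduct, Fin.sum_univ_five, conjTranspose_apply]

theorem conjTranspose_A_mulVec_A_mulVec_ξ (hst : s ^ 2 + t ^ 2 = 1) :
    (A s t)ᴴ *ᵥ (A s t *ᵥ ξ s t) = ξ s t - A s t *ᵥ (A s t *ᵥ ξ s t) := by
  have hstC : (s : ℂ) ^ 2 + (t : ℂ) ^ 2 = 1 := by exact_mod_cast hst
  rw [A_mulVec_A_mulVec_ξ, A_mulVec_ξ]
  ext i
  fin_cases i <;> simp [A, ξ, mulVec, dotProduct, Fin.sum_univ_five, conjTranspose_apply]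
  linear_combination -hstC

theorem conjTranspose_A_mulVec_A_mulVec_A_mulVec_ξ :
    (A s t)ᴴ *ᵥ (A s t *ᵥ (A s t *ᵥ ξ s t)) = A s t *ᵥ ξ s t := by
  rw [A_mulVec_A_mulVec_ξ, A_mulVec_ξ]
  ext i
  fin_cases i <;> simp [A, mulVec, dotProduct, Fin.sum_univ_five, conjTranspose_apply]

theorem L_ne_bot : L s t ≠ ⊥ := by
  refine Submodule.span_eq_bot.not.mpr fun h => ?_
  simpa [ξ] using congrFun (h (ξ s t) (by simp)) 4

theorem L_ne_top : L s t ≠ ⊤ :=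
  Submodule.span_triple_ne_top (by simp) _ _ _

theorem mulVec_mem_L : ∀ v ∈ L s t, A s t *ᵥ v ∈ L s t :=
  (A s t).mulVec_mem_span_krylov_three <| by
    simp only [mulVec_mulVec, ← pow_three, A_pow_three, zero_mulVec]

theorem conjTranspose_mulVec_mem_L (hst : s ^ 2 + t ^ 2 = 1) :
    ∀ v ∈ L s t, (A s t)ᴴ *ᵥ v ∈ L s t := by
  have hξ : ξ s t ∈ L s t := Submodule.subset_span (by simp)
  have hAξ : A s t *ᵥ ξ s t ∈ L s t := Submodule.subset_span (by simp)
  have hA2ξ : A s t *ᵥ (A s t *ᵥ ξ s t) ∈ L s t := Submodule.subset_span (by simp)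
  refine (A s t)ᴴ.mulVec_mem_span_of_forall_mem ?_
  rintro x (rfl | rfl | rfl)
  · rwa [conjTranspose_A_mulVec_ξ]
  · rw [conjTranspose_A_mulVec_A_mulVec_ξ s t hst]
    exact Submodule.sub_mem _ hξ hA2ξ
  · rwa [conjTranspose_A_mulVec_A_mulVec_A_mulVec_ξ]

end BOneCZero

theorem reducing_subspace_case_b_one_c_zero_general (s t : ℝ)
    (hst : s ^ 2 + t ^ 2 = 1) :
    let A : Matrix (Fin 5) (Fin 5) ℂ :=
      !![0, 0, 1, 0, 0;
         0, 0, 0, 1, 0;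
         0, 0, 0, 0, ((-t : ℝ) : ℂ);
         0, 0, 0, 0, (s : ℂ);
         0, 0, 0, 0, 0]
    let ξ : Fin 5 → ℂ := ![(t : ℂ), ((-s : ℝ) : ℂ), 0, 0, -1]
    let L : Submodule ℂ (Fin 5 → ℂ) :=
      Submodule.span ℂ {ξ, A.mulVec ξ, A.mulVec (A.mulVec ξ)}
    A ^ 3 = 0 ∧ L ≠ ⊥ ∧ L ≠ ⊤ ∧
      (∀ v ∈ L, A.mulVec v ∈ L) ∧ (∀ v ∈ L, Aᴴ.mulVec v ∈ L) :=
  ⟨BOneCZero.A_pow_three s t, BOneCZero.L_ne_bot s t, BOneCZero.L_ne_top s t,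
    BOneCZero.mulVec_mem_L s t, BOneCZero.conjTranspose_mulVec_mem_L s t hst⟩

theorem reducing_subspace_case_b_one_c_zero (s t : ℝ) (hs : 0 < s) (ht : 0 < t)
    (hst : s ^ 2 + t ^ 2 = 1) :
    let A : Matrix (Fin 5) (Fin 5) ℂ :=
      !![0, 0, 1, 0, 0;
         0, 0, 0, 1, 0;
         0, 0, 0, 0, ((-t : ℝ) : ℂ);
         0, 0, 0, 0, (s : ℂ);
         0, 0, 0, 0, 0]
    let ξ : Fin 5 → ℂ := ![(t : ℂ), ((-s : ℝ) : ℂ), 0, 0, -1]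
    let L : Submodule ℂ (Fin 5 → ℂ) :=
      Submodule.span ℂ {ξ, A.mulVec ξ, A.mulVec (A.mulVec ξ)}
    A ^ 3 = 0 ∧ L ≠ ⊥ ∧ L ≠ ⊤ ∧
      (∀ v ∈ L, A.mulVec v ∈ L) ∧ (∀ v ∈ L, Aᴴ.mulVec v ∈ L) :=
  reducing_subspace_case_b_one_c_zero_general s t hst
end

section
/- Let A = [[0,0,1,0,0],[0,0,0,0,tc],[0,0,0,c,0],[0,0,0,0,s],[0,0,0,0,0]] with c = 1, and s,t > 0 with s²+t²=1 (the case b = 0 of the family). With ξ = [t, −s, 0, t, 0]ᵀ, the five vectors ξ, Aξ, A²ξ, A*²ξ, A*³ξ are linearly independent in ℂ⁵. -/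
/-!
Both A and A* = Aᵀ send ξ to t·e₂ (0-indexed). Further applications of A and A* then move along
standard basis vectors: A²ξ = t·e₀, A*²ξ = t·e₃, A*³ξ = st·e₄. Of the five vectors only ξ has a
nonzero coordinate 1, namely −s, so the matrix with these rows has determinant −s²t⁴ ≠ 0.
-/

open Matrix

namespace IndependentOrbit

variable (s t : ℝ)

def orbitMatrix : Matrix (Fin 5) (Fin 5) ℂ :=
  !![0, 0, 1, 0, 0;
     0, 0, 0, 0, (t : ℂ);
     0, 0, 0, 1, 0;
     0, 0, 0, 0, (s : ℂ);
     0, 0, 0, 0, 0]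

def orbitSeed : Fin 5 → ℂ := ![(t : ℂ), ((-s : ℝ) : ℂ), 0, (t : ℂ), 0]

lemma orbitMatrix_mulVec_orbitSeed :
    orbitMatrix s t *ᵥ orbitSeed s t = Pi.single 2 (t : ℂ) := by
  ext j; fin_cases j <;> simp [orbitMatrix, orbitSeed, mulVec, dotProduct, Fin.sum_univ_succ]

lemma orbitMatrix_mulVec_single_two :
    orbitMatrix s t *ᵥ Pi.single 2 (t : ℂ) = Pi.single 0 (t : ℂ) := by
  ext j; fin_cases j <;> simp [orbitMatrix, mulVec, dotProduct, Fin.sum_univ_succ]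

lemma conjTranspose_mulVec_orbitSeed :
    (orbitMatrix s t)ᴴ *ᵥ orbitSeed s t = Pi.single 2 (t : ℂ) := by
  ext j; fin_cases j <;>
    simp [orbitMatrix, orbitSeed, mulVec, dotProduct, Fin.sum_univ_succ, conjTranspose_apply,
      mul_comm]

lemma conjTranspose_mulVec_single_two :
    (orbitMatrix s t)ᴴ *ᵥ Pi.single 2 (t : ℂ) = Pi.single 3 (t : ℂ) := by
  ext j; fin_cases j <;>
    simp [orbitMatrix, mulVec, dotProduct, Fin.sum_univ_succ, conjTranspose_apply]

lemma conjTranspose_mulVec_single_three :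
    (orbitMatrix s t)ᴴ *ᵥ Pi.single 3 (t : ℂ) = Pi.single 4 (s * t : ℂ) := by
  ext j; fin_cases j <;>
    simp [orbitMatrix, mulVec, dotProduct, Fin.sum_univ_succ, conjTranspose_apply, mul_comm]

def orbitRows : Matrix (Fin 5) (Fin 5) ℂ :=
  of ![orbitSeed s t, Pi.single 2 (t : ℂ), Pi.single 0 (t : ℂ),
    Pi.single 3 (t : ℂ), Pi.single 4 (s * t : ℂ)]

lemma det_orbitRows : (orbitRows s t).det = -(s ^ 2 * t ^ 4 : ℂ) := by
  simp [orbitRows, orbitSeed, det_succ_row_zero, Fin.sum_univ_succ, Fin.succAbove]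
  ring

lemma linearIndependent_orbitRows {s t : ℝ} (hs : s ≠ 0) (ht : t ≠ 0) :
    LinearIndependent ℂ (orbitRows s t).row := by
  rw [linearIndependent_rows_iff_isUnit, isUnit_iff_isUnit_det, isUnit_iff_ne_zero,
    det_orbitRows]
  simpa using ⟨hs, ht⟩

end IndependentOrbit

open IndependentOrbit in
theorem independent_orbit_case_b_zero_c_one_general (s t : ℝ) (hs : 0 < s) (ht : 0 < t) :
    let A : Matrix (Fin 5) (Fin 5) ℂ :=
      !![0, 0, 1, 0, 0;
         0, 0, 0, 0, (t : ℂ);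
         0, 0, 0, 1, 0;
         0, 0, 0, 0, (s : ℂ);
         0, 0, 0, 0, 0]
    let ξ : Fin 5 → ℂ := ![(t : ℂ), ((-s : ℝ) : ℂ), 0, (t : ℂ), 0]
    LinearIndependent ℂ
      ![ξ, A.mulVec ξ, A.mulVec (A.mulVec ξ),
        Aᴴ.mulVec (Aᴴ.mulVec ξ), Aᴴ.mulVec (Aᴴ.mulVec (Aᴴ.mulVec ξ))] := by
  change LinearIndependent ℂ ![orbitSeed s t, orbitMatrix s t *ᵥ orbitSeed s t,
    orbitMatrix s t *ᵥ (orbitMatrix s t *ᵥ orbitSeed s t),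
    (orbitMatrix s t)ᴴ *ᵥ ((orbitMatrix s t)ᴴ *ᵥ orbitSeed s t),
    (orbitMatrix s t)ᴴ *ᵥ ((orbitMatrix s t)ᴴ *ᵥ ((orbitMatrix s t)ᴴ *ᵥ orbitSeed s t))]
  rw [orbitMatrix_mulVec_orbitSeed, orbitMatrix_mulVec_single_two, conjTranspose_mulVec_orbitSeed,
    conjTranspose_mulVec_single_two, conjTranspose_mulVec_single_three]
  exact linearIndependent_orbitRows hs.ne' ht.ne'

theorem independent_orbit_case_b_zero_c_one (s t : ℝ) (hs : 0 < s) (ht : 0 < t)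
    (hst : s ^ 2 + t ^ 2 = 1) :
    let A : Matrix (Fin 5) (Fin 5) ℂ :=
      !![0, 0, 1, 0, 0;
         0, 0, 0, 0, (t : ℂ);
         0, 0, 0, 1, 0;
         0, 0, 0, 0, (s : ℂ);
         0, 0, 0, 0, 0]
    let ξ : Fin 5 → ℂ := ![(t : ℂ), ((-s : ℝ) : ℂ), 0, (t : ℂ), 0]
    LinearIndependent ℂ
      ![ξ, A.mulVec ξ, A.mulVec (A.mulVec ξ),
        Aᴴ.mulVec (Aᴴ.mulVec ξ), Aᴴ.mulVec (Aᴴ.mulVec (Aᴴ.mulVec ξ))] :=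
  independent_orbit_case_b_zero_c_one_general s t hs ht
end

section
/- For the 5-by-5 matrix A = [[0,0,1,0,0],[0,0,0,b,tc],[0,0,0,c,−tb],[0,0,0,0,s],[0,0,0,0,0]] with b,c,s,t ≥ 0, s²+t²=1, b²+c²=1, the eigenvalues of the upper-left 4-by-4 principal submatrix of Re(e^{−iθ}A) are (1/2)√(1+c), −(1/2)√(1+c), (1/2)√(1−c), −(1/2)√(1−c), independently of θ. -/
/-! The upper-left 4 × 4 block of `Re(e^{-iθ} A)` is supported on the edges of the path
`0 — 2 — 3 — 1`. The characteristic polynomial of a path matrix only involves the products of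
the two weights on each edge, `X ^ 4 - (Σ edges) X ^ 2 + (perfect matching)`, and each such
product is `|e^{-iθ}|² / 4` times a real weight, so the phase drops out. With `b² + c² = 1` the
polynomial factors as `(X² - (1 + c)/4)(X² - (1 - c)/4)`. -/

open Matrix Polynomial

theorem Matrix.charpoly_path_fin_four {R : Type*} [CommRing R] (p p' q q' r r' : R) :
    (!![0, 0, p, 0;
        0, 0, 0, q;
        p', 0, 0, r;
        0, q', r', 0] : Matrix (Fin 4) (Fin 4) R).charpoly =
      X ^ 4 - C (p * p' + q * q' + r * r') * X ^ 2 + C (p * p' * q * q') := by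
  rw [charpoly, det_succ_row_zero]
  simp [Fin.sum_univ_succ, det_succ_row_zero, charmatrix_apply, Fin.succAbove, submatrix_apply,
    diagonal_apply]
  ring

theorem Polynomial.X_sq_sub_C_mul_X_sq_sub_C {R : Type*} [CommRing R] (a a' : R) :
    (X ^ 2 - C a) * (X ^ 2 - C a') = X ^ 4 - C (a + a') * X ^ 2 + C (a * a') := by
  simp only [map_add, map_mul]
  ring

theorem charpoly_gauged_path_fin_four {z w : ℂ} (hzw : z * w = 1) {b c : ℝ}
    (hbc : b ^ 2 + c ^ 2 = 1) :
    (!![0, 0, z / 2, 0;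
        0, 0, 0, z * b / 2;
        w / 2, 0, 0, z * c / 2;
        0, w * b / 2, w * c / 2, 0] : Matrix (Fin 4) (Fin 4) ℂ).charpoly =
      (X ^ 2 - C (((1 + c) / 4 : ℝ) : ℂ)) * (X ^ 2 - C (((1 - c) / 4 : ℝ) : ℂ)) := by
  have hbc' : (b : ℂ) ^ 2 + (c : ℂ) ^ 2 = 1 := by exact_mod_cast hbc
  have hsum : z / 2 * (w / 2) + z * b / 2 * (w * b / 2) + z * c / 2 * (w * c / 2) =
      ((1 + c) / 4 : ℝ) + ((1 - c) / 4 : ℝ) := by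
    push_cast
    linear_combination (1 + b ^ 2 + c ^ 2 : ℂ) / 4 * hzw + hbc' / 4
  have hprod : z / 2 * (w / 2) * (z * b / 2) * (w * b / 2) =
      ((1 + c) / 4 : ℝ) * ((1 - c) / 4 : ℝ) := by
    push_cast
    linear_combination ((z * w + 1) * b ^ 2 : ℂ) / 16 * hzw + hbc' / 16
  rw [charpoly_path_fin_four, X_sq_sub_C_mul_X_sq_sub_C, hsum, hprod]

theorem submatrix_castSucc_realPart_eq (z : ℂ) (b c s t : ℝ) :
    let A : Matrix (Fin 5) (Fin 5) ℂ :=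
      !![0, 0, 1, 0, 0;
         0, 0, 0, (b : ℂ), ((t * c : ℝ) : ℂ);
         0, 0, 0, (c : ℂ), ((-(t * b) : ℝ) : ℂ);
         0, 0, 0, 0, (s : ℂ);
         0, 0, 0, 0, 0]
    ((1 / 2 : ℂ) • (z • A + (z • A)ᴴ)).submatrix Fin.castSucc Fin.castSucc =
      !![0, 0, z / 2, 0;
         0, 0, 0, z * b / 2;
         starRingEnd ℂ z / 2, 0, 0, z * c / 2;
         0, starRingEnd ℂ z * b / 2, starRingEnd ℂ z * c / 2, 0] := by
  intro A
  ext i j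
  fin_cases i <;> fin_cases j <;>
    simp [A, conjTranspose_apply, Fin.castSucc, Fin.castAdd, Fin.castLE] <;> ring

theorem Complex.exp_mul_I_mul_conj (θ : ℝ) :
    exp (θ * I) * (starRingEnd ℂ) (exp (θ * I)) = 1 := by
  rw [mul_conj, normSq_eq_norm_sq, norm_exp_ofReal_mul_I]
  simp

open Polynomial in
theorem submatrix_eigenvalues_5x5_general (b c s t θ : ℝ)
    (hbc : b ^ 2 + c ^ 2 = 1) :
    let A : Matrix (Fin 5) (Fin 5) ℂ :=
      !![0, 0, 1, 0, 0;
         0, 0, 0, (b : ℂ), ((t * c : ℝ) : ℂ);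
         0, 0, 0, (c : ℂ), ((-(t * b) : ℝ) : ℂ);
         0, 0, 0, 0, (s : ℂ);
         0, 0, 0, 0, 0]
    let M : Matrix (Fin 5) (Fin 5) ℂ :=
      (1 / 2 : ℂ) • (Complex.exp (-(θ : ℂ) * Complex.I) • A +
        (Complex.exp (-(θ : ℂ) * Complex.I) • A)ᴴ)
    (M.submatrix (fun i : Fin 4 => i.castSucc) (fun i : Fin 4 => i.castSucc)).charpoly =
      (X ^ 2 - C (((1 + c) / 4 : ℝ) : ℂ)) * (X ^ 2 - C (((1 - c) / 4 : ℝ) : ℂ)) := by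
  intro A M
  have hunit := Complex.exp_mul_I_mul_conj (-θ)
  rw [Complex.ofReal_neg] at hunit
  rw [show M.submatrix _ _ = _ from submatrix_castSucc_realPart_eq _ b c s t]
  exact charpoly_gauged_path_fin_four hunit hbc

open Polynomial in
theorem submatrix_eigenvalues_5x5 (b c s t θ : ℝ)
    (hb : 0 ≤ b) (hc : 0 ≤ c) (hs : 0 ≤ s) (ht : 0 ≤ t)
    (hst : s ^ 2 + t ^ 2 = 1) (hbc : b ^ 2 + c ^ 2 = 1) :
    let A : Matrix (Fin 5) (Fin 5) ℂ :=
      !![0, 0, 1, 0, 0;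
         0, 0, 0, (b : ℂ), ((t * c : ℝ) : ℂ);
         0, 0, 0, (c : ℂ), ((-(t * b) : ℝ) : ℂ);
         0, 0, 0, 0, (s : ℂ);
         0, 0, 0, 0, 0]
    let M : Matrix (Fin 5) (Fin 5) ℂ :=
      (1 / 2 : ℂ) • (Complex.exp (-(θ : ℂ) * Complex.I) • A +
        (Complex.exp (-(θ : ℂ) * Complex.I) • A)ᴴ)
    (M.submatrix (fun i : Fin 4 => i.castSucc) (fun i : Fin 4 => i.castSucc)).charpoly =
      (X ^ 2 - C (((1 + c) / 4 : ℝ) : ℂ)) * (X ^ 2 - C (((1 - c) / 4 : ℝ) : ℂ)) :=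
  submatrix_eigenvalues_5x5_general b c s t θ hbc
end
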